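/- arXiv:1302.2503 — 9 statements merged into one kernel-verified Lean document; each statement's English description precedes it below -/
import Mathlib

section
/- Suppose x_1, …, x_{u+v} are rational numbers such that the multiset {x_1, …, x_{u+v}} is a sub-multiset of the multiset of coordinates of τ, and such that the numbers x_r + (u+v+1−2r)/2, for r = 1, …, u+v, are strictly decreasing nonzero integers, each of absolute value at most n, with pairwise distinct absolute values. Then x_r + (u+v+1−2r)/2 = i'_r for 1 ≤ r ≤ u, and x_{u+m} + (u+v+1−2(u+m))/2 = −j'_{v+1−m} for 1 ≤ m ≤ v; that is, the shifted vector (x_r + (u+v+1−2r)/2)_{r=1}^{u+v} equals (i'_1, …, i'_u, −j'_v, …, −j'_1). -/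
/-- Auxiliary counting lemma: a sub-multiset has at most as many elements
satisfying any predicate. -/
lemma count_aux {α : Type*} (x τ : ℕ → α) (N M : ℕ)
    (hsub : Multiset.map x (Finset.range N).val ≤ Multiset.map τ (Finset.range M).val)
    (p : α → Prop) [DecidablePred p] :
    ((Finset.range N).filter (fun s => p (x s))).card ≤
      ((Finset.range M).filter (fun m => p (τ m))).card := by
  have h := Multiset.card_le_card (Multiset.filter_le_filter p hsub)
  rw [Multiset.filter_map, Multiset.filter_map, Multiset.card_map, Multiset.card_map] at h
  simpa [Finset.card, Finset.filter_val, Function.comp] using h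

/-- Lemma "lemmatail" of Barbasch–Pandžić. Fix `n = 2k + u + v` with `k ≥ 1`, and
disjoint sets of positive integers `{i'_1 > … > i'_u}`, `{j'_1 > … > j'_v}` with union
`{1, …, u+v}`.  Let `τ ∈ (½ℤ)ⁿ` be the candidate highest weight with tail built from the
`i'`, `j'` and core `(u−v+1)/2`.  If `x_1, …, x_{u+v}` is a sub-multiset of the
coordinates of `τ` such that the shifted numbers `x_r + (u+v+1−2r)/2` are strictly
decreasing nonzero integers of absolute value at most `n` with pairwise distinct absolute
values, then the shifted vector equals `(i'_1, …, i'_u, −j'_v, …, −j'_1)`.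
(Indices are 0-based, so `r`-th shift is `(u+v−1−2r)/2`.) -/
theorem stmt3 (n k u v : ℕ) (hk : 1 ≤ k) (hn : 2 * k + u + v = n)
    (i' j' : ℕ → ℤ)
    (hi'anti : ∀ r s, r < s → s < u → i' s < i' r)
    (hj'anti : ∀ r s, r < s → s < v → j' s < j' r)
    (hi'pos : ∀ r, r < u → 0 < i' r)
    (hj'pos : ∀ r, r < v → 0 < j' r)
    (hdisj : Disjoint ((Finset.range u).image i') ((Finset.range v).image j'))
    (hunion : (Finset.range u).image i' ∪ (Finset.range v).image j' =
      (Finset.range (u + v)).image (fun m : ℕ => (m : ℤ) + 1))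
    (τ : ℕ → ℚ)
    (hτ1 : ∀ r, r < u → τ r = (i' r : ℚ) - ((u : ℚ) + v - 1 - 2 * r) / 2)
    (hτ2 : ∀ r, u ≤ r → r < u + 2 * k → τ r = ((u : ℚ) - v + 1) / 2)
    (hτ3 : ∀ s, s < v →
      τ (u + 2 * k + s) = -(j' (v - 1 - s) : ℚ) + ((u : ℚ) - v + 1 + 2 * s) / 2)
    (x : ℕ → ℚ)
    (hsub : Multiset.map x (Finset.range (u + v)).val ≤
      Multiset.map τ (Finset.range n).val)
    (hint : ∀ r, r < u + v →
      ∃ m : ℤ, m ≠ 0 ∧ x r + ((u : ℚ) + v - 1 - 2 * r) / 2 = m)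
    (hanti : ∀ r s, r < s → s < u + v →
      x s + ((u : ℚ) + v - 1 - 2 * s) / 2 < x r + ((u : ℚ) + v - 1 - 2 * r) / 2)
    (hbound : ∀ r, r < u + v → |x r + ((u : ℚ) + v - 1 - 2 * r) / 2| ≤ n)
    (habs : ∀ r s, r < u + v → s < u + v → r ≠ s →
      |x r + ((u : ℚ) + v - 1 - 2 * r) / 2| ≠ |x s + ((u : ℚ) + v - 1 - 2 * s) / 2|) :
    (∀ r, r < u → x r + ((u : ℚ) + v - 1 - 2 * r) / 2 = (i' r : ℚ)) ∧
    (∀ m, m < v →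
      x (u + m) + ((u : ℚ) + v - 1 - 2 * (u + m)) / 2 = -(j' (v - 1 - m) : ℚ)) := by
  -- upper bounds on i', j' from hunion
  have hiub : ∀ r, r < u → i' r ≤ (u : ℤ) + v := by
    intro r hr
    have hmem : i' r ∈ (Finset.range u).image i' ∪ (Finset.range v).image j' :=
      Finset.mem_union_left _ (Finset.mem_image_of_mem i' (Finset.mem_range.mpr hr))
    rw [hunion] at hmem
    obtain ⟨m, hm, hme⟩ := Finset.mem_image.mp hmem
    have hm' := Finset.mem_range.mp hm
    omega
  have hjub : ∀ s, s < v → j' s ≤ (u : ℤ) + v := by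
    intro s hs
    have hmem : j' s ∈ (Finset.range u).image i' ∪ (Finset.range v).image j' :=
      Finset.mem_union_right _ (Finset.mem_image_of_mem j' (Finset.mem_range.mpr hs))
    rw [hunion] at hmem
    obtain ⟨m, hm, hme⟩ := Finset.mem_image.mp hmem
    have hm' := Finset.mem_range.mp hm
    omega
  -- gap bound for i'
  have higap : ∀ s, s < u → ∀ r, r ≤ s → i' s + (s : ℤ) ≤ i' r + r := by
    intro s
    induction s with
    | zero =>
      intro _ r hr
      have : r = 0 := by omega
      subst this
      exact le_rfl
    | succ t ih =>
      intro hsu r hrs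
      rcases Nat.eq_or_lt_of_le hrs with h | h
      · subst h; exact le_rfl
      · have h1 : i' (t + 1) < i' t := hi'anti t (t + 1) (by omega) hsu
        have h2 := ih (by omega) r (by omega)
        push_cast
        push_cast at h2
        omega
  have hilb : ∀ r, r < u → (u : ℤ) - r ≤ i' r := by
    intro r hr
    have h1 := higap (u - 1) (by omega) r (by omega)
    have h2 := hi'pos (u - 1) (by omega)
    omega
  -- τ is weakly decreasing
  have hτadj : ∀ m, m + 1 < n → τ (m + 1) ≤ τ m := by
    intro m hm
    rcases Nat.lt_or_ge (m + 1) u with h1 | h1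
    · have ha : i' (m + 1) < i' m := hi'anti m (m + 1) (by omega) h1
      have ha' : (i' (m + 1) : ℚ) + 1 ≤ (i' m : ℚ) := by exact_mod_cast ha
      rw [hτ1 m (by omega), hτ1 (m + 1) h1]
      push_cast
      linarith
    · rcases Nat.lt_or_ge (m + 1) (u + 2 * k) with h2 | h2
      · rcases Nat.lt_or_ge m u with h3 | h3
        · rw [hτ1 m h3, hτ2 (m + 1) h1 h2]
          have h4 : (1 : ℚ) ≤ (i' m : ℚ) := by exact_mod_cast hi'pos m h3
          have h6 : (u : ℚ) ≤ (m : ℚ) + 1 := by exact_mod_cast h1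
          push_cast
          linarith
        · rw [hτ2 m h3 (by omega), hτ2 (m + 1) (by omega) h2]
      · rcases Nat.lt_or_ge m (u + 2 * k) with h3 | h3
        · have hv : 0 < v := by omega
          have h0 := hτ3 0 hv
          simp only [Nat.add_zero, Nat.sub_zero] at h0
          have he : m + 1 = u + 2 * k := by omega
          rw [hτ2 m (by omega) h3, he, h0]
          have hj1 : (1 : ℚ) ≤ (j' (v - 1) : ℚ) := by exact_mod_cast hj'pos (v - 1) (by omega)
          push_cast
          linarith
        · have hs1 : m = u + 2 * k + (m - (u + 2 * k)) := by omega
          set s := m - (u + 2 * k) with hsdef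
          have hsv : s + 1 < v := by omega
          have hm2 : m + 1 = u + 2 * k + (s + 1) := by omega
          have hja : j' (v - 1 - s) < j' (v - 1 - (s + 1)) :=
            hj'anti (v - 1 - (s + 1)) (v - 1 - s) (by omega) (by omega)
          have hja' : (j' (v - 1 - s) : ℚ) + 1 ≤ (j' (v - 1 - (s + 1)) : ℚ) := by
            exact_mod_cast hja
          rw [hm2, hτ3 (s + 1) hsv]
          rw [hs1]
          rw [hτ3 s (by omega)]
          push_cast
          linarith
  have hτanti : ∀ b, b < n → ∀ a, a ≤ b → τ b ≤ τ a := by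
    intro b
    induction b with
    | zero =>
      intro _ a ha
      have : a = 0 := by omega
      rw [this]
    | succ t ih =>
      intro hb a ha
      rcases Nat.eq_or_lt_of_le ha with h | h
      · rw [h]
      · exact le_trans (hτadj t hb) (ih (by omega) a (by omega))
  -- x is weakly decreasing
  have hxstep : ∀ r, r + 1 < u + v → x (r + 1) ≤ x r := by
    intro r hr
    obtain ⟨m1, _, h1⟩ := hint r (by omega)
    obtain ⟨m2, _, h2⟩ := hint (r + 1) hr
    have hlt := hanti r (r + 1) (by omega) hr
    rw [h1, h2] at hlt
    have hmm : m2 < m1 := by exact_mod_cast hlt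
    have h3 : (m2 : ℚ) + 1 ≤ (m1 : ℚ) := by exact_mod_cast hmm
    push_cast at h1 h2
    linarith
  have hxmono : ∀ s, s < u + v → ∀ r, r ≤ s → x s ≤ x r := by
    intro s
    induction s with
    | zero =>
      intro _ r hr
      have : r = 0 := by omega
      rw [this]
    | succ t ih =>
      intro hs r hr
      rcases Nat.eq_or_lt_of_le hr with h | h
      · rw [h]
      · exact le_trans (hxstep t hs) (ih (by omega) r (by omega))
  -- domination from the sub-multiset condition
  have B1 : ∀ r, r < u + v → x r ≤ τ r := by
    intro r hr
    by_contra hcon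
    push_neg at hcon
    have h := count_aux x τ (u + v) n hsub (fun q => τ r < q)
    have hA : Finset.range (r + 1) ⊆
        (Finset.range (u + v)).filter (fun s => τ r < x s) := by
      intro s hs
      rw [Finset.mem_range] at hs
      rw [Finset.mem_filter, Finset.mem_range]
      exact ⟨by omega, lt_of_lt_of_le hcon (hxmono r hr s (by omega))⟩
    have hB : (Finset.range n).filter (fun m => τ r < τ m) ⊆ Finset.range r := by
      intro m hm
      rw [Finset.mem_filter, Finset.mem_range] at hm
      rw [Finset.mem_range]
      by_contra hc
      exact absurd (hτanti m hm.1 r (by omega)) (not_le.mpr hm.2)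
    have hfin := (Finset.card_le_card hA).trans (h.trans (Finset.card_le_card hB))
    simp only [Finset.card_range] at hfin
    omega
  have B2 : ∀ r, r < u + v → τ (2 * k + r) ≤ x r := by
    intro r hr
    by_contra hcon
    push_neg at hcon
    have h := count_aux x τ (u + v) n hsub (fun q => q < τ (2 * k + r))
    have hA : Finset.Ico r (u + v) ⊆
        (Finset.range (u + v)).filter (fun s => x s < τ (2 * k + r)) := by
      intro s hs
      rw [Finset.mem_Ico] at hs
      rw [Finset.mem_filter, Finset.mem_range]
      exact ⟨hs.2, lt_of_le_of_lt (hxmono s hs.2 r hs.1) hcon⟩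
    have hB : (Finset.range n).filter (fun m => τ m < τ (2 * k + r)) ⊆
        Finset.Ico (2 * k + r + 1) n := by
      intro m hm
      rw [Finset.mem_filter, Finset.mem_range] at hm
      rw [Finset.mem_Ico]
      refine ⟨?_, hm.1⟩
      by_contra hc
      exact absurd (hτanti (2 * k + r) (by omega) m (by omega)) (not_le.mpr hm.2)
    have hfin := (Finset.card_le_card hA).trans (h.trans (Finset.card_le_card hB))
    rw [Nat.card_Ico, Nat.card_Ico] at hfin
    omega
  have hcore1 : τ (u + 2 * k - 1) = ((u : ℚ) - v + 1) / 2 := hτ2 _ (by omega) (by omega)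
  have hcoreu : τ u = ((u : ℚ) - v + 1) / 2 := hτ2 u le_rfl (by omega)
  -- the four key bounds
  have C1 : ∀ r, r < u → (u : ℚ) - r ≤ x r + ((u : ℚ) + v - 1 - 2 * r) / 2 := by
    intro r hr
    have h1 := B2 r (by omega)
    have h2 : τ (u + 2 * k - 1) ≤ τ (2 * k + r) :=
      hτanti (u + 2 * k - 1) (by omega) (2 * k + r) (by omega)
    rw [hcore1] at h2
    linarith
  have C2 : ∀ r, r < u → x r + ((u : ℚ) + v - 1 - 2 * r) / 2 ≤ (i' r : ℚ) := by
    intro r hr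
    have h1 := B1 r (by omega)
    rw [hτ1 r hr] at h1
    linarith
  have C3 : ∀ m, m < v →
      -(j' (v - 1 - m) : ℚ) ≤ x (u + m) + ((u : ℚ) + v - 1 - 2 * (u + m : ℕ)) / 2 := by
    intro m hm
    have h1 := B2 (u + m) (by omega)
    have he : 2 * k + (u + m) = u + 2 * k + m := by omega
    rw [he, hτ3 m hm] at h1
    push_cast
    linarith
  have C4 : ∀ m, m < v →
      x (u + m) + ((u : ℚ) + v - 1 - 2 * (u + m : ℕ)) / 2 ≤ -(m : ℚ) := by
    intro m hm
    have h1 := B1 (u + m) (by omega)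
    have h2 : τ (u + m) ≤ τ u := hτanti (u + m) (by omega) u (by omega)
    rw [hcoreu] at h2
    push_cast
    linarith
  -- set up the absolute value function
  set F : ℕ → ℚ := fun r => |x r + ((u : ℚ) + v - 1 - 2 * r) / 2| with hF
  set G : ℕ → ℚ := fun r =>
    if r < u then (i' r : ℚ) else (j' (v - 1 - (r - u)) : ℚ) with hG
  have hFpos : ∀ r, r < u → F r = x r + ((u : ℚ) + v - 1 - 2 * r) / 2 := by
    intro r hr
    have h1 := C1 r hr
    have hr' : (r : ℚ) + 1 ≤ u := by exact_mod_cast hr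
    simp only [hF]
    exact abs_of_nonneg (by linarith)
  have hFneg : ∀ m, m < v →
      F (u + m) = -(x (u + m) + ((u : ℚ) + v - 1 - 2 * (u + m : ℕ)) / 2) := by
    intro m hm
    have h1 := C4 m hm
    have hm0 : (0 : ℚ) ≤ (m : ℚ) := by positivity
    simp only [hF]
    exact abs_of_nonpos (by linarith)
  have hFinj : ∀ a ∈ Finset.range (u + v), ∀ b ∈ Finset.range (u + v),
      F a = F b → a = b := by
    intro a ha b hb hab
    by_contra hne
    exact habs a b (Finset.mem_range.mp ha) (Finset.mem_range.mp hb) hne hab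
  set Z : Finset ℤ := (Finset.range (u + v)).image (fun m : ℕ => (m : ℤ) + 1) with hZ
  have hmemZ : ∀ r, r < u + v → ∃ z ∈ Z, (z : ℚ) = F r := by
    intro r hr
    obtain ⟨m, hm0, hmeq⟩ := hint r hr
    have habs_ub : |m| ≤ (u : ℤ) + v := by
      rcases Nat.lt_or_ge r u with h | h
      · have h2 := C2 r h
        have h1 := C1 r h
        rw [hmeq] at h1 h2
        have hmle : (m : ℤ) ≤ i' r := by exact_mod_cast h2
        have hmge : (1 : ℚ) ≤ (m : ℚ) := by
          have hr' : (r : ℚ) + 1 ≤ u := by exact_mod_cast h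
          linarith
        have hmge' : (1 : ℤ) ≤ m := by exact_mod_cast hmge
        have := hiub r h
        rw [abs_of_nonneg (by omega : (0:ℤ) ≤ m)]
        omega
      · have hru : u + (r - u) = r := by omega
        have hmv : r - u < v := by omega
        have h3 := C3 (r - u) hmv
        have h4 := C4 (r - u) hmv
        rw [hru, hmeq] at h3 h4
        have hge : -(j' (v - 1 - (r - u))) ≤ m := by exact_mod_cast h3
        have hle0 : (m : ℚ) ≤ -((r - u : ℕ) : ℚ) := h4
        have hm0' : m ≤ 0 := by
          have : (m : ℚ) ≤ 0 := le_trans hle0 (by simp)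
          exact_mod_cast this
        have := hjub (v - 1 - (r - u)) (by omega)
        rw [abs_of_nonpos hm0']
        omega
    have habs_lb : 1 ≤ |m| := by
      rcases lt_or_gt_of_ne hm0 with h | h
      · rw [abs_of_nonpos (by omega)]; omega
      · rw [abs_of_nonneg (by omega)]; omega
    refine ⟨|m|, ?_, ?_⟩
    · rw [hZ, Finset.mem_image]
      exact ⟨(|m| - 1).toNat, Finset.mem_range.mpr (by omega), by omega⟩
    · simp only [hF]
      rw [hmeq, ← Int.cast_abs]
  set A : Finset ℚ := (Finset.range (u + v)).image F with hA
  set B : Finset ℚ := Z.image (fun z : ℤ => (z : ℚ)) with hB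
  have hAB : A ⊆ B := by
    intro q hq
    rw [hA, Finset.mem_image] at hq
    obtain ⟨r, hr, hre⟩ := hq
    obtain ⟨z, hz, hze⟩ := hmemZ r (Finset.mem_range.mp hr)
    rw [hB, Finset.mem_image]
    exact ⟨z, hz, by rw [hze, hre]⟩
  have hcardA : A.card = u + v := by
    rw [hA, Finset.card_image_of_injOn (fun a ha b hb hab => hFinj a ha b hb hab),
      Finset.card_range]
  have hcardB : B.card ≤ u + v := by
    calc B.card ≤ Z.card := Finset.card_image_le
      _ ≤ (Finset.range (u + v)).card := by rw [hZ]; exact Finset.card_image_le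
      _ = u + v := Finset.card_range _
  have hABeq : A = B := Finset.eq_of_subset_of_card_le hAB (by omega)
  have hi'inj : ∀ a ∈ Finset.range u, ∀ b ∈ Finset.range u, i' a = i' b → a = b := by
    intro a ha b hb h
    by_contra hne
    rcases Nat.lt_or_ge a b with hl | hg
    · exact absurd h (ne_of_gt (hi'anti a b hl (Finset.mem_range.mp hb)))
    · have : b < a := by omega
      exact absurd h (ne_of_lt (hi'anti b a this (Finset.mem_range.mp ha)))
  have hj'inj : ∀ a ∈ Finset.range v, ∀ b ∈ Finset.range v, j' a = j' b → a = b := by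
    intro a ha b hb h
    by_contra hne
    rcases Nat.lt_or_ge a b with hl | hg
    · exact absurd h (ne_of_gt (hj'anti a b hl (Finset.mem_range.mp hb)))
    · have : b < a := by omega
      exact absurd h (ne_of_lt (hj'anti b a this (Finset.mem_range.mp ha)))
  have hFG : ∑ r ∈ Finset.range (u + v), F r = ∑ r ∈ Finset.range (u + v), G r := by
    have hsumF : ∑ r ∈ Finset.range (u + v), F r = ∑ q ∈ A, q := by
      rw [hA, Finset.sum_image hFinj]
    have hsumB : ∑ q ∈ B, q = ∑ z ∈ Z, (z : ℚ) := by
      rw [hB, Finset.sum_image (fun a _ b _ h => Int.cast_injective h)]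
    have hsumZ : ∑ z ∈ Z, (z : ℚ) =
        ∑ r ∈ Finset.range u, (i' r : ℚ) + ∑ s ∈ Finset.range v, (j' s : ℚ) := by
      rw [← hunion, Finset.sum_union hdisj, Finset.sum_image hi'inj,
        Finset.sum_image hj'inj]
    have hsumG : ∑ r ∈ Finset.range (u + v), G r =
        ∑ r ∈ Finset.range u, (i' r : ℚ) + ∑ s ∈ Finset.range v, (j' s : ℚ) := by
      rw [Finset.sum_range_add]
      congr 1
      · apply Finset.sum_congr rfl
        intro r hr
        simp only [hG, if_pos (Finset.mem_range.mp hr)]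
      · calc ∑ m ∈ Finset.range v, G (u + m)
            = ∑ m ∈ Finset.range v, (j' (v - 1 - m) : ℚ) := by
              apply Finset.sum_congr rfl
              intro m hm
              simp only [hG]
              rw [if_neg (by omega), Nat.add_sub_cancel_left]
          _ = ∑ s ∈ Finset.range v, (j' s : ℚ) :=
              Finset.sum_range_reflect (fun s => (j' s : ℚ)) v
    rw [hsumF, hABeq, hsumB, hsumZ, hsumG]
  have hle : ∀ r ∈ Finset.range (u + v), F r ≤ G r := by
    intro r hr
    rw [Finset.mem_range] at hr
    rcases Nat.lt_or_ge r u with h | h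
    · rw [hFpos r h]
      simp only [hG, if_pos h]
      exact C2 r h
    · have hru : u + (r - u) = r := by omega
      have hmv : r - u < v := by omega
      rw [← hru, hFneg (r - u) hmv]
      simp only [hG]
      rw [if_neg (by omega), Nat.add_sub_cancel_left]
      have := C3 (r - u) hmv
      linarith
  have hpt := (Finset.sum_eq_sum_iff_of_le hle).mp hFG
  constructor
  · intro r hr
    have h := hpt r (Finset.mem_range.mpr (by omega))
    rw [hFpos r hr] at h
    simp only [hG, if_pos hr] at h
    exact h
  · intro m hm
    have h := hpt (u + m) (Finset.mem_range.mpr (by omega))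
    rw [hFneg m hm] at h
    simp only [hG] at h
    rw [if_neg (by omega), Nat.add_sub_cancel_left] at h
    push_cast at h
    linarith
end

section
/- Suppose z_1 > z_2 > … > z_{q+p} are integers with pairwise distinct absolute values such that {|z_1|, …, |z_{q+p}|} = {u+v+1, u+v+2, …, n}, and suppose there exist integers b_1 ≥ … ≥ b_q ≥ 0 and a_1 ≥ … ≥ a_p ≥ 0 such that z_i − η − 2b_i = u+q+1−i for 1 ≤ i ≤ q and z_{q+j} + ε + 2a_{p+1−j} = −v−(j−1) for 1 ≤ j ≤ p. Then: (1) z_i and z_{i+1} have opposite parities for 1 ≤ i ≤ q−1 and for q+1 ≤ i ≤ q+p−1; (2) z_i > 0 for 1 ≤ i ≤ q and z_{q+j} < 0 for 1 ≤ j ≤ p; (3) z_1 = n or z_{q+p} = −n, and moreover z_q = u+v+1 or z_{q+1} = −(u+v+1). -/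
/-- Necessary conditions on `σρ_𝔤` (projected to the first `q` and last `p`
coordinates, here `z : ℕ → ℤ` of length `q+p`) in a solution of the Dirac cohomology
multiplicity equation for `X(p,q;ε,η)` (Lemma "sigma_general").  All indices
are 0-based. -/
theorem stmt4 (n k u v p q ε η : ℕ) (hk : 1 ≤ k) (hn : 2 * k + u + v = n)
    (hp : 0 < p) (hq : 0 < q) (hpq : p + q = 2 * k) (hε : ε ≤ 1) (hη : η ≤ 1)
    (z : ℕ → ℤ)
    (hzanti : ∀ i j, i < j → j < q + p → z j < z i)
    (habs : ∀ i j, i < q + p → j < q + p → i ≠ j → |z i| ≠ |z j|)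
    (himg : (Finset.range (q + p)).image (fun i => |z i|) =
      Finset.Icc ((u : ℤ) + v + 1) (n : ℤ))
    (b a : ℕ → ℤ)
    (hbanti : ∀ i j, i ≤ j → j < q → b j ≤ b i)
    (hbnonneg : ∀ i, i < q → 0 ≤ b i)
    (haanti : ∀ i j, i ≤ j → j < p → a j ≤ a i)
    (hanonneg : ∀ i, i < p → 0 ≤ a i)
    (hzb : ∀ i, i < q → z i - η - 2 * b i = (u : ℤ) + q - i)
    (hza : ∀ j, j < p → z (q + j) + ε + 2 * a (p - 1 - j) = -(v : ℤ) - j) :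
    ((∀ i, i + 1 < q → Odd (z i + z (i + 1))) ∧
      (∀ i, q ≤ i → i + 1 < q + p → Odd (z i + z (i + 1)))) ∧
    ((∀ i, i < q → 0 < z i) ∧ (∀ j, j < p → z (q + j) < 0)) ∧
    ((z 0 = (n : ℤ) ∨ z (q + p - 1) = -(n : ℤ)) ∧
      (z (q - 1) = (u : ℤ) + v + 1 ∨ z q = -((u : ℤ) + v + 1))) := by
  have hmem : ∀ i, i < q + p → (u:ℤ)+v+1 ≤ |z i| ∧ |z i| ≤ n := by
    intro i hi
    have : |z i| ∈ Finset.Icc ((u:ℤ)+v+1) (n:ℤ) := by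
      rw [← himg]
      exact Finset.mem_image.mpr ⟨i, Finset.mem_range.mpr hi, rfl⟩
    exact Finset.mem_Icc.mp this
  have hpos : ∀ i, i < q → 0 < z i := by
    intro i hi
    have e := hzb i hi
    have hb := hbnonneg i hi
    have h1 : (i:ℤ) < q := by exact_mod_cast hi
    have h2 : (0:ℤ) ≤ η := by positivity
    have h3 : (0:ℤ) ≤ u := by positivity
    linarith
  have hneg : ∀ j, j < p → z (q + j) < 0 := by
    intro j hj
    have e := hza j hj
    have ha := hanonneg (p-1-j) (by omega)
    have h2 : (0:ℤ) ≤ ε := by positivity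
    have h3 : (0:ℤ) ≤ v := by positivity
    have h4 : (0:ℤ) ≤ j := by positivity
    have hle : z (q + j) ≤ 0 := by linarith
    have h1 := (hmem (q+j) (by omega)).1
    rcases abs_cases (z (q+j)) with ⟨h,_⟩|⟨h,_⟩
    · omega
    · omega
  have h3a : z 0 = (n:ℤ) ∨ z (q+p-1) = -(n:ℤ) := by
    have hmemn : (n:ℤ) ∈ Finset.Icc ((u:ℤ)+v+1) (n:ℤ) := by
      refine Finset.mem_Icc.mpr ⟨by omega, le_refl _⟩
    rw [← himg] at hmemn
    obtain ⟨i, hi, habsz⟩ := Finset.mem_image.mp hmemn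
    rw [Finset.mem_range] at hi
    rcases abs_cases (z i) with ⟨h,_⟩|⟨h,_⟩
    · left
      rcases Nat.eq_zero_or_pos i with rfl|hi0
      · omega
      · have hlt := hzanti 0 i hi0 hi
        have h0 := (hmem 0 (by omega)).2
        rcases abs_cases (z 0) with ⟨h0',_⟩|⟨h0',_⟩ <;> omega
    · right
      by_cases hi' : i = q + p - 1
      · subst hi'; omega
      · have hlt := hzanti i (q+p-1) (by omega) (by omega)
        have h0 := (hmem (q+p-1) (by omega)).2
        rcases abs_cases (z (q+p-1)) with ⟨h0',_⟩|⟨h0',_⟩ <;> omega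
  have h3b : z (q - 1) = (u : ℤ) + v + 1 ∨ z q = -((u : ℤ) + v + 1) := by
    have hmemn : ((u:ℤ)+v+1) ∈ Finset.Icc ((u:ℤ)+v+1) (n:ℤ) := by
      refine Finset.mem_Icc.mpr ⟨le_refl _, by omega⟩
    rw [← himg] at hmemn
    obtain ⟨i, hi, habsz⟩ := Finset.mem_image.mp hmemn
    rw [Finset.mem_range] at hi
    rcases abs_cases (z i) with ⟨h,_⟩|⟨h,_⟩
    · left
      have hiq : i < q := by
        by_contra hc
        have hidx : q + (i - q) = i := by omega
        have := hneg (i - q) (by omega)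
        rw [hidx] at this
        omega
      have hle : z (q-1) ≤ z i := by
        rcases eq_or_lt_of_le (Nat.le_sub_one_of_lt hiq) with heq|hlt'
        · rw [heq]
        · exact le_of_lt (hzanti i (q-1) hlt' (by omega))
      have hp1 := (hmem (q-1) (by omega)).1
      have hp2 := hpos (q-1) (by omega)
      rcases abs_cases (z (q-1)) with ⟨h0',_⟩|⟨h0',_⟩ <;> omega
    · right
      have hiq : q ≤ i := by
        by_contra hc
        have := hpos i (by omega)
        omega
      have hle : z i ≤ z q := by
        rcases eq_or_lt_of_le hiq with heq|hlt'
        · rw [heq]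
        · exact le_of_lt (hzanti q i hlt' hi)
      have hp1 := (hmem q (by omega)).1
      have hp2 := hneg 0 (by omega)
      rw [Nat.add_zero] at hp2
      rcases abs_cases (z q) with ⟨h0',_⟩|⟨h0',_⟩ <;> omega
  refine ⟨⟨?_, ?_⟩, ⟨hpos, hneg⟩, h3a, h3b⟩
  · intro i hi
    have e1 := hzb i (by omega)
    have e2 := hzb (i+1) hi
    refine ⟨(u:ℤ)+q-i-1+η+b i+b (i+1), ?_⟩
    push_cast at e2 ⊢
    linarith
  · intro i hqi hi
    obtain ⟨j, rfl⟩ := Nat.exists_eq_add_of_le hqi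
    have e1 := hza j (by omega)
    have e2 := hza (j+1) (by omega)
    have hidx : q + (j+1) = q + j + 1 := by omega
    rw [hidx] at e2
    refine ⟨-(v:ℤ)-j-1-ε-a (p-1-j)-a (p-1-(j+1)), ?_⟩
    push_cast at e2 ⊢
    linarith
end

section
/- Suppose x_1 > x_2 > … > x_q and y_1 > y_2 > … > y_p are strictly decreasing positive integers whose underlying sets are disjoint and have union {u+v+1, u+v+2, …, n}, satisfying the parity conditions x_i ≡ u+q+1−i+η (mod 2) for all 1 ≤ i ≤ q and y_m ≡ v+p−m+ε (mod 2) for all 1 ≤ m ≤ p. Then there exist unique integers b_1, …, b_q and a_1, …, a_p such that x_i = (u+q+1−i) + η + 2b_i for all i and y_m = (v+p−m) + ε + 2a_m for all m; moreover these b_i and a_m are automatically nonnegative and satisfy b_1 ≥ b_2 ≥ … ≥ b_q and a_1 ≥ a_2 ≥ … ≥ a_p. -/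
lemma aux_gap {q : ℕ} {x : Fin q → ℤ} (h : StrictAnti x) :
    ∀ d : ℕ, ∀ i j : Fin q, j.1 = i.1 + d → x j + j.1 ≤ x i + i.1 := by
  intro d
  induction d with
  | zero => intro i j hij; have : i = j := Fin.ext (by omega); subst this; omega
  | succ d ih =>
    intro i j hij
    have hlt : i.1 + d < q := by have := j.isLt; omega
    have h1 : x ⟨i.1 + d, hlt⟩ + ((⟨i.1 + d, hlt⟩ : Fin q) : ℕ) ≤ x i + i.1 :=
      ih i ⟨i.1 + d, hlt⟩ rfl
    have h2 : x j < x ⟨i.1 + d, hlt⟩ := h (by simp [Fin.lt_def]; omega)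
    have h3 : ((⟨i.1 + d, hlt⟩ : Fin q) : ℕ) = i.1 + d := rfl
    rw [h3] at h1
    push_cast [hij] at h1 ⊢
    omega

lemma aux_gap' {q : ℕ} {x : Fin q → ℤ} (h : StrictAnti x) (i j : Fin q) (hij : i ≤ j) :
    x j + j.1 ≤ x i + i.1 := aux_gap h (j.1 - i.1) i j (by omega)

/-- Reduction of the Dirac cohomology multiplicity equation for `X(p,q;ε,η)` to a
counting problem modulo 2: if `x_1 > … > x_q` and `y_1 > … > y_p` are positive integers
with disjoint union `{u+v+1, …, n}` satisfying the parity conditions, then there exist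
unique integers `b_i, a_m` with `x_i = (u+q+1−i) + η + 2b_i` and
`y_m = (v+p−m) + ε + 2a_m`, and these are automatically nonnegative and weakly
decreasing.  (Indices are 0-based.) -/
theorem stmt5 (n k u v p q ε η : ℕ) (hk : 1 ≤ k) (hn : 2 * k + u + v = n)
    (hpq : p + q = 2 * k) (hε : ε ≤ 1) (hη : η ≤ 1)
    (x : Fin q → ℤ) (y : Fin p → ℤ)
    (hxanti : StrictAnti x) (hyanti : StrictAnti y)
    (hxpos : ∀ i, 0 < x i) (hypos : ∀ m, 0 < y m)
    (hdisj : Disjoint (Finset.univ.image x) (Finset.univ.image y))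
    (hunion : Finset.univ.image x ∪ Finset.univ.image y =
      Finset.Icc ((u : ℤ) + v + 1) (n : ℤ))
    (hxpar : ∀ i : Fin q, x i ≡ (u : ℤ) + q - i.1 + η [ZMOD 2])
    (hypar : ∀ m : Fin p, y m ≡ (v : ℤ) + p - 1 - m.1 + ε [ZMOD 2]) :
    (∃! ba : (Fin q → ℤ) × (Fin p → ℤ),
      (∀ i : Fin q, x i = (u : ℤ) + q - i.1 + η + 2 * ba.1 i) ∧
      (∀ m : Fin p, y m = (v : ℤ) + p - 1 - m.1 + ε + 2 * ba.2 m)) ∧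
    (∀ b : Fin q → ℤ, ∀ a : Fin p → ℤ,
      ((∀ i : Fin q, x i = (u : ℤ) + q - i.1 + η + 2 * b i) ∧
        (∀ m : Fin p, y m = (v : ℤ) + p - 1 - m.1 + ε + 2 * a m)) →
      (∀ i, 0 ≤ b i) ∧ (∀ m, 0 ≤ a m) ∧ Antitone b ∧ Antitone a) := by
  -- membership in the interval
  have hxmem : ∀ i : Fin q, x i ∈ Finset.Icc ((u : ℤ) + v + 1) (n : ℤ) := by
    intro i
    rw [← hunion]
    exact Finset.mem_union_left _ (Finset.mem_image_of_mem x (Finset.mem_univ i))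
  have hymem : ∀ m : Fin p, y m ∈ Finset.Icc ((u : ℤ) + v + 1) (n : ℤ) := by
    intro m
    rw [← hunion]
    exact Finset.mem_union_right _ (Finset.mem_image_of_mem y (Finset.mem_univ m))
  -- lower bounds
  have hxlb : ∀ i : Fin q, (u : ℤ) + v + q - i.1 ≤ x i := by
    intro i
    have hq : 0 < q := i.pos
    have hj : q - 1 < q := by omega
    have h1 := aux_gap' hxanti i ⟨q - 1, hj⟩ (by simp [Fin.le_def]; omega)
    have h2 := (Finset.mem_Icc.mp (hxmem ⟨q - 1, hj⟩)).1
    have h3 : ((⟨q - 1, hj⟩ : Fin q) : ℕ) = q - 1 := rfl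
    rw [h3] at h1
    have h4 : ((q - 1 : ℕ) : ℤ) = (q : ℤ) - 1 := by omega
    rw [h4] at h1
    omega
  have hylb : ∀ m : Fin p, (u : ℤ) + v + p - m.1 ≤ y m := by
    intro m
    have hp : 0 < p := m.pos
    have hj : p - 1 < p := by omega
    have h1 := aux_gap' hyanti m ⟨p - 1, hj⟩ (by simp [Fin.le_def]; omega)
    have h2 := (Finset.mem_Icc.mp (hymem ⟨p - 1, hj⟩)).1
    have h3 : ((⟨p - 1, hj⟩ : Fin p) : ℕ) = p - 1 := rfl
    rw [h3] at h1
    have h4 : ((p - 1 : ℕ) : ℤ) = (p : ℤ) - 1 := by omega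
    rw [h4] at h1
    omega
  constructor
  · -- existence and uniqueness
    have hbdvd : ∀ i : Fin q, (2 : ℤ) ∣ (x i - ((u : ℤ) + q - i.1 + η)) := by
      intro i
      exact (Int.ModEq.dvd (hxpar i).symm)
    have hadvd : ∀ m : Fin p, (2 : ℤ) ∣ (y m - ((v : ℤ) + p - 1 - m.1 + ε)) := by
      intro m
      exact (Int.ModEq.dvd (hypar m).symm)
    refine ⟨⟨fun i => (x i - ((u : ℤ) + q - i.1 + η)) / 2,
             fun m => (y m - ((v : ℤ) + p - 1 - m.1 + ε)) / 2⟩, ⟨?_, ?_⟩, ?_⟩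
    · intro i
      dsimp only
      have := Int.ediv_mul_cancel (hbdvd i)
      omega
    · intro m
      dsimp only
      have := Int.ediv_mul_cancel (hadvd m)
      omega
    · rintro ⟨b', a'⟩ ⟨hb', ha'⟩
      dsimp only at hb' ha'
      have hb : b' = fun i => (x i - ((u : ℤ) + q - i.1 + η)) / 2 := by
        funext i
        have h1 := hb' i
        have h2 := Int.ediv_mul_cancel (hbdvd i)
        omega
      have ha : a' = fun m => (y m - ((v : ℤ) + p - 1 - m.1 + ε)) / 2 := by
        funext m
        have h1 := ha' m
        have h2 := Int.ediv_mul_cancel (hadvd m)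
        omega
      simp [hb, ha]
  · -- nonnegativity and monotonicity
    rintro b a ⟨hb, ha⟩
    refine ⟨?_, ?_, ?_, ?_⟩
    · intro i
      have h1 := hb i
      have h2 := hxlb i
      omega
    · intro m
      have h1 := ha m
      have h2 := hylb m
      omega
    · intro i j hij
      have h1 := hb i
      have h2 := hb j
      have h3 := aux_gap' hxanti i j hij
      omega
    · intro i j hij
      have h1 := ha i
      have h2 := ha j
      have h3 := aux_gap' hyanti i j hij
      omega
end

section
/- Suppose q = 0 (so p = 2k). Then the number of reduced solutions for the data (n,k,u,v,p,0,ε,η) is 1 if u ≡ ε+1 (mod 2), and 0 if u ≡ ε (mod 2). Symmetrically, suppose p = 0 (so q = 2k). Then the number of reduced solutions for the data (n,k,u,v,0,q,ε,η) is 1 if v ≡ η (mod 2), and 0 if v ≡ η+1 (mod 2). -/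
/-- A *reduced solution* for the data `(n,k,u,v,p,q,ε,η)` (with `n = 2k+u+v`,
`p + q = 2k`): strictly decreasing positive integers `x_1 > … > x_q` and
`y_1 > … > y_p` whose underlying sets are disjoint with union `{u+v+1, …, n}`,
together with weakly decreasing nonnegative integers `b_1 ≥ … ≥ b_q ≥ 0`,
`a_1 ≥ … ≥ a_p ≥ 0` such that `x_i = (u+q+1−i) + η + 2b_i` and
`y_m = (v+p−m) + ε + 2a_m` (written here with 0-based indices). -/
structure RedSol (n u v p q ε η : ℕ) where
  x : Fin q → ℤ
  y : Fin p → ℤ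
  b : Fin q → ℤ
  a : Fin p → ℤ
  x_anti : StrictAnti x
  y_anti : StrictAnti y
  x_pos : ∀ i, 0 < x i
  y_pos : ∀ m, 0 < y m
  disj : Disjoint (Finset.univ.image x) (Finset.univ.image y)
  uni : Finset.univ.image x ∪ Finset.univ.image y =
    Finset.Icc ((u : ℤ) + v + 1) (n : ℤ)
  b_anti : Antitone b
  a_anti : Antitone a
  b_nonneg : ∀ i, 0 ≤ b i
  a_nonneg : ∀ m, 0 ≤ a m
  hx : ∀ i : Fin q, x i = (u : ℤ) + q - i.1 + η + 2 * b i
  hy : ∀ m : Fin p, y m = (v : ℤ) + p - 1 - m.1 + ε + 2 * a m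

/-- A strictly decreasing map `Fin p → ℤ` with image `Icc (L+1) (L+p)` is
`m ↦ L + p - m`. -/
lemma strictAnti_image_Icc {p : ℕ} {L : ℤ} {f : Fin p → ℤ} (hf : StrictAnti f)
    (him : Finset.univ.image f = Finset.Icc (L + 1) (L + p)) (m : Fin p) :
    f m = L + p - m.1 := by
  set s : Finset ℤ := Finset.Icc (L + 1) (L + (p : ℤ)) with hs
  have hcard : s.card = p := by
    rw [hs, Int.card_Icc]; omega
  have hmemf : ∀ x : Fin p, f x ∈ s := by
    intro x
    rw [← him]
    exact Finset.mem_image_of_mem f (Finset.mem_univ x)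
  have hrev : StrictAnti (Fin.rev : Fin p → Fin p) := fun a b h => Fin.rev_lt_rev.mpr h
  have hg : (fun m : Fin p => f m.rev) = s.orderEmbOfFin hcard :=
    Finset.orderEmbOfFin_unique hcard (fun x => hmemf x.rev) (hf.comp hrev)
  have hz : (fun m : Fin p => L + 1 + m.1) = s.orderEmbOfFin hcard := by
    refine Finset.orderEmbOfFin_unique hcard (fun x => ?_) (fun a b h => by
      simpa using (Int.ofNat_lt.mpr h : (a.1 : ℤ) < b.1))
    rw [hs, Finset.mem_Icc]
    have := x.2
    omega
  have := (congrFun hg m.rev).trans (congrFun hz m.rev).symm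
  simp only [Fin.rev_rev, Fin.val_rev] at this
  rw [this]
  have := m.2
  omega

/-- Proposition "propzero": if `q = 0` (so `p = 2k`), the number of reduced solutions is
`1` when `u ≡ ε+1 (mod 2)` and `0` when `u ≡ ε (mod 2)`; symmetrically, if `p = 0`
(so `q = 2k`), it is `1` when `v ≡ η (mod 2)` and `0` when `v ≡ η+1 (mod 2)`. -/
theorem stmt6 (n k u v ε η : ℕ) (hk : 1 ≤ k) (hn : 2 * k + u + v = n)
    (hε : ε ≤ 1) (hη : η ≤ 1) :
    ((u % 2 = (ε + 1) % 2 → Nat.card (RedSol n u v (2 * k) 0 ε η) = 1) ∧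
      (u % 2 = ε % 2 → Nat.card (RedSol n u v (2 * k) 0 ε η) = 0)) ∧
    ((v % 2 = η % 2 → Nat.card (RedSol n u v 0 (2 * k) ε η) = 1) ∧
      (v % 2 = (η + 1) % 2 → Nat.card (RedSol n u v 0 (2 * k) ε η) = 0)) := by
  have hncast : (n : ℤ) = ((u : ℤ) + v) + (2 * k : ℕ) := by push_cast; omega
  -- determination of `y` in the `q = 0` case
  have hyform : ∀ s : RedSol n u v (2 * k) 0 ε η, ∀ m : Fin (2 * k),
      s.y m = (u : ℤ) + v + (2 * k : ℕ) - m.1 := by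
    intro s m
    have huni := s.uni
    rw [Finset.univ_eq_empty, Finset.image_empty, Finset.empty_union, hncast] at huni
    exact strictAnti_image_Icc s.y_anti huni m
  -- determination of `x` in the `p = 0` case
  have hxform : ∀ s : RedSol n u v 0 (2 * k) ε η, ∀ i : Fin (2 * k),
      s.x i = (u : ℤ) + v + (2 * k : ℕ) - i.1 := by
    intro s i
    have huni := s.uni
    rw [Finset.univ_eq_empty (α := Fin 0), Finset.image_empty, Finset.union_empty,
      hncast] at huni
    exact strictAnti_image_Icc s.x_anti huni i
  refine ⟨⟨?_, ?_⟩, ?_, ?_⟩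
  · -- q = 0, existence and uniqueness
    intro hpar
    rw [Nat.card_eq_one_iff_unique]
    constructor
    · constructor
      rintro ⟨x1, y1, b1, a1, _, _, _, _, _, _, _, _, _, _, _, hy1⟩
        ⟨x2, y2, b2, a2, _, _, _, _, _, _, _, _, _, _, _, hy2⟩
      have h1 : ∀ m : Fin (2 * k), y1 m = (u : ℤ) + v + (2 * k : ℕ) - m.1 :=
        hyform ⟨x1, y1, b1, a1, ‹_›, ‹_›, ‹_›, ‹_›, ‹_›, ‹_›, ‹_›, ‹_›, ‹_›, ‹_›, ‹_›, hy1⟩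
      have h2 : ∀ m : Fin (2 * k), y2 m = (u : ℤ) + v + (2 * k : ℕ) - m.1 :=
        hyform ⟨x2, y2, b2, a2, ‹_›, ‹_›, ‹_›, ‹_›, ‹_›, ‹_›, ‹_›, ‹_›, ‹_›, ‹_›, ‹_›, hy2⟩
      simp only [RedSol.mk.injEq]
      refine ⟨funext fun i => i.elim0, funext fun m => (h1 m).trans (h2 m).symm,
        funext fun i => i.elim0, funext fun m => ?_⟩
      have e1 := hy1 m; have e2 := hy2 m
      have := h1 m; have := h2 m
      omega
    · -- construction
      have hd : ∃ d : ℕ, u + 1 = ε + 2 * d := ⟨(u + 1 - ε) / 2, by omega⟩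
      obtain ⟨d, hd⟩ := hd
      refine ⟨⟨Fin.elim0, fun m => (u : ℤ) + v + (2 * k : ℕ) - m.1, Fin.elim0,
        fun _ => (d : ℤ), fun i => i.elim0, ?_, fun i => i.elim0, ?_, ?_, ?_,
        fun i => i.elim0, fun _ _ _ => le_refl _, fun i => i.elim0, fun _ => by positivity,
        fun i => i.elim0, ?_⟩⟩
      · intro m1 m2 h
        have : m1.1 < m2.1 := h
        simp only
        omega
      · intro m; have := m.2; push_cast; omega
      · simp [Finset.univ_eq_empty]
      · rw [Finset.univ_eq_empty, Finset.image_empty, Finset.empty_union, hncast]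
        ext t
        simp only [Finset.mem_image, Finset.mem_univ, true_and, Finset.mem_Icc]
        constructor
        · rintro ⟨m, rfl⟩; have := m.2; push_cast; omega
        · intro ⟨h1, h2⟩
          refine ⟨⟨((u : ℤ) + v + (2 * k : ℕ) - t).toNat, by push_cast at h1 h2 ⊢; omega⟩, ?_⟩
          push_cast at h1 h2 ⊢; omega
      · intro m
        push_cast
        omega
  · -- q = 0, emptiness
    intro hpar
    have : IsEmpty (RedSol n u v (2 * k) 0 ε η) := by
      constructor
      intro s
      have hm : (0 : ℕ) < 2 * k := by omega
      have h1 := hyform s ⟨0, hm⟩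
      have h2 := s.hy ⟨0, hm⟩
      rw [h1] at h2
      have := s.a_nonneg ⟨0, hm⟩
      omega
    exact Nat.card_of_isEmpty
  · -- p = 0, existence and uniqueness
    intro hpar
    rw [Nat.card_eq_one_iff_unique]
    constructor
    · constructor
      rintro ⟨x1, y1, b1, a1, _, _, _, _, _, _, _, _, _, _, hx1, _⟩
        ⟨x2, y2, b2, a2, _, _, _, _, _, _, _, _, _, _, hx2, _⟩
      have h1 : ∀ i : Fin (2 * k), x1 i = (u : ℤ) + v + (2 * k : ℕ) - i.1 :=
        hxform ⟨x1, y1, b1, a1, ‹_›, ‹_›, ‹_›, ‹_›, ‹_›, ‹_›, ‹_›, ‹_›, ‹_›, ‹_›, hx1, ‹_›⟩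
      have h2 : ∀ i : Fin (2 * k), x2 i = (u : ℤ) + v + (2 * k : ℕ) - i.1 :=
        hxform ⟨x2, y2, b2, a2, ‹_›, ‹_›, ‹_›, ‹_›, ‹_›, ‹_›, ‹_›, ‹_›, ‹_›, ‹_›, hx2, ‹_›⟩
      simp only [RedSol.mk.injEq]
      refine ⟨funext fun i => (h1 i).trans (h2 i).symm, funext fun m => m.elim0,
        funext fun i => ?_, funext fun m => m.elim0⟩
      have e1 := hx1 i; have e2 := hx2 i
      have := h1 i; have := h2 i
      omega
    · have hd : ∃ d : ℕ, v = η + 2 * d := ⟨(v - η) / 2, by omega⟩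
      obtain ⟨d, hd⟩ := hd
      refine ⟨⟨fun i => (u : ℤ) + v + (2 * k : ℕ) - i.1, Fin.elim0,
        fun _ => (d : ℤ), Fin.elim0, ?_, fun m => m.elim0, ?_, fun m => m.elim0, ?_, ?_,
        fun _ _ _ => le_refl _, fun m => m.elim0, fun _ => by positivity, fun m => m.elim0,
        ?_, fun m => m.elim0⟩⟩
      · intro m1 m2 h
        have : m1.1 < m2.1 := h
        simp only
        omega
      · intro i; have := i.2; push_cast; omega
      · simp [Finset.univ_eq_empty (α := Fin 0)]
      · rw [Finset.univ_eq_empty (α := Fin 0), Finset.image_empty, Finset.union_empty, hncast]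
        ext t
        simp only [Finset.mem_image, Finset.mem_univ, true_and, Finset.mem_Icc]
        constructor
        · rintro ⟨m, rfl⟩; have := m.2; push_cast; omega
        · intro ⟨h1, h2⟩
          refine ⟨⟨((u : ℤ) + v + (2 * k : ℕ) - t).toNat, by push_cast at h1 h2 ⊢; omega⟩, ?_⟩
          push_cast at h1 h2 ⊢; omega
      · intro i
        push_cast
        omega
  · -- p = 0, emptiness
    intro hpar
    have : IsEmpty (RedSol n u v 0 (2 * k) ε η) := by
      constructor
      intro s
      have hm : (0 : ℕ) < 2 * k := by omega
      have h1 := hxform s ⟨0, hm⟩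
      have h2 := s.hx ⟨0, hm⟩
      rw [h1] at h2
      have := s.b_nonneg ⟨0, hm⟩
      omega
    exact Nat.card_of_isEmpty
end

section
/- Suppose p and q are even and positive, ε+η ≡ n (mod 2), and u ≡ ε+1 (mod 2). Then the number of reduced solutions for the data (n,k,u,v,p,q,ε,η) equals the binomial coefficient C(k−1, (p−2)/2) = C(k−1, q/2). -/
/-!
Write `N = u + v` and, for `w` in `{N+1, …, N+2k}`, let `c(w)` be the number of `x`'s above `w`.
Because the `x`'s and the `y`'s enumerate complementary sets decreasingly, `x_i` has exactly `i`
`x`'s above it and `y_m` has exactly `m` `y`'s above it. So, mod 2, the defining equations say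
`c(x) ≡ x - N - 1` at every `x` and `c(y) ≡ 0` at every `y`; conversely, once these parities hold,
the offsets `b, a` are recovered as halves and are automatically weakly decreasing and nonnegative.
Comparing `c(w)` with `c(w + 1)` shows that the parity rules force the top and (as `q` is even) the
bottom of the interval to be `y`'s, and each block `{N+2j+2, N+2j+3}`, `0 ≤ j < k - 1`, to consist
of `x`'s only or of `y`'s only; every choice of `q/2` blocks of `x`'s satisfies them.
-/

open Finset

section DecreasingEnumeration

variable {α : Type*} [LinearOrder α] {c : ℕ} {f g : Fin c → α}

theorem card_filter_lt_apply_of_strictAnti (hf : StrictAnti f) (i : Fin c) :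
    #{z ∈ univ.image f | f i < z} = i := by
  rw [filter_image, card_image_of_injective _ hf.injective]
  simp [hf.lt_iff_gt, filter_gt_eq_Iio]

theorem eq_of_strictAnti_of_image_eq (hf : StrictAnti f) (hg : StrictAnti g)
    (h : univ.image f = univ.image g) : f = g := by
  funext i
  obtain ⟨j, -, hj⟩ := mem_image.mp (h ▸ mem_image_of_mem f (mem_univ i))
  have hji : j = i := Fin.ext <| by
    rw [← card_filter_lt_apply_of_strictAnti hg j, ← card_filter_lt_apply_of_strictAnti hf i, h,
      hj]
  rw [← hj, hji]

theorem exists_strictAnti_image_eq {S : Finset α} (h : #S = c) :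
    ∃ f : Fin c → α, StrictAnti f ∧ univ.image f = S :=
  ⟨fun i => S.orderEmbOfFin h i.rev,
    fun _ _ hij => (S.orderEmbOfFin h).strictMono (Fin.rev_lt_rev.mpr hij), by
      change univ.image (S.orderEmbOfFin h ∘ Fin.rev) = S
      rw [← image_image, image_univ_of_surjective Fin.rev_surjective, image_orderEmbOfFin_univ]⟩

end DecreasingEnumeration

theorem antitone_add_val_of_strictAnti :
    ∀ {c : ℕ} {f : Fin c → ℤ}, StrictAnti f → Antitone fun i : Fin c => f i + i
  | 0, _, _ => fun i => i.elim0
  | _ + 1, f, hf => Fin.antitone_iff_succ_le.mpr fun i => by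
    have : f i.succ < f i.castSucc := hf Fin.castSucc_lt_succ
    simp only [Fin.val_succ, Fin.val_castSucc]
    push_cast
    omega

theorem exists_antitone_nonneg_of_strictAnti {c : ℕ} {f : Fin c → ℤ} (hf : StrictAnti f)
    (C : ℤ) (hparity : ∀ i : Fin c, (f i - (C - i)) % 2 = 0) (hlow : ∀ i, C - c + 1 ≤ f i) :
    ∃ g : Fin c → ℤ, Antitone g ∧ (∀ i, 0 ≤ g i) ∧ ∀ i, f i = C - i + 2 * g i := by
  refine ⟨fun i => (f i - (C - i)) / 2, fun i j hij => ?_, fun i => ?_,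
    fun i => by have := hparity i; beta_reduce; omega⟩
  · have := antitone_add_val_of_strictAnti hf hij
    dsimp only at this ⊢
    exact Int.ediv_le_ediv two_pos (by omega)
  · have hi := i.isLt
    have := antitone_add_val_of_strictAnti hf
      (show i ≤ ⟨c - 1, by omega⟩ from Fin.le_iff_val_le_val.mpr (by dsimp only; omega))
    have := hlow ⟨c - 1, by omega⟩
    dsimp only at *
    exact Int.ediv_nonneg (by omega) two_pos.le

theorem card_filter_lt_eq_card_filter_succ_lt_add (X : Finset ℤ) (w : ℤ) :
    #{z ∈ X | w < z} = #{z ∈ X | w + 1 < z} + if w + 1 ∈ X then 1 else 0 := by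
  have hsplit : {z ∈ X | w < z} = {z ∈ X | w + 1 < z} ∪ {z ∈ X | w + 1 = z} := by
    ext z
    simp only [mem_filter, mem_union, ← and_or_left]
    exact and_congr_right fun _ => by omega
  rw [hsplit, card_union_of_disjoint (disjoint_filter.mpr fun _ _ h => h.ne), filter_eq]
  split_ifs <;> simp

theorem val_add_card_filter_lt_of_image_eq_sdiff {a b : ℤ} {X : Finset ℤ} (hX : X ⊆ Icc a b)
    {c : ℕ} {y : Fin c → ℤ} (hy : StrictAnti y) (hyX : univ.image y = Icc a b \ X)
    (m : Fin c) : (m : ℤ) + #{z ∈ X | y m < z} = b - y m := by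
  have hm := mem_Icc.mp (mem_sdiff.mp (hyX ▸ mem_image_of_mem y (mem_univ m))).1
  have hIcc : {z ∈ Icc a b | y m < z} = Icc (y m + 1) b := by
    ext z
    simp only [mem_filter, mem_Icc]
    omega
  have := card_union_of_disjoint (disjoint_filter_filter (p := (y m < ·)) (q := (y m < ·))
    (sdiff_disjoint : Disjoint (Icc a b \ X) X))
  rw [← filter_union, sdiff_union_of_subset hX, hIcc, Int.card_Icc, ← hyX,
    card_filter_lt_apply_of_strictAnti hy] at this
  omega

section Pairs

variable (N : ℤ) {K : ℕ}

def pairAt (j : ℕ) : Finset ℤ := {N + 2 * j + 2, N + 2 * j + 3}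

def pairUnion (T : Finset (Fin K)) : Finset ℤ := T.biUnion fun j => pairAt N j

variable {N} {T : Finset (Fin K)} {w : ℤ}

theorem mem_pairAt {j : ℕ} : w ∈ pairAt N j ↔ w = N + 2 * j + 2 ∨ w = N + 2 * j + 3 := by
  simp [pairAt]

theorem mem_pairUnion :
    w ∈ pairUnion N T ↔ ∃ j ∈ T, w = N + 2 * j.val + 2 ∨ w = N + 2 * j.val + 3 := by
  simp [pairUnion, mem_pairAt]

theorem pairwiseDisjoint_pairAt (T : Finset (Fin K)) :
    (T : Set (Fin K)).PairwiseDisjoint fun j => pairAt N j := fun i _ j _ hij => by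
  have := Fin.val_injective.ne hij
  simp only [Function.onFun, disjoint_left, mem_pairAt]
  omega

theorem card_pairUnion (T : Finset (Fin K)) : #(pairUnion N T) = 2 * #T := by
  rw [pairUnion, card_biUnion (pairwiseDisjoint_pairAt T), sum_const_nat fun j _ => ?_, mul_comm]
  exact card_pair (by omega)

theorem add_two_mul_add_two_mem_pairUnion_iff {j : Fin K} :
    N + 2 * (j : ℕ) + 2 ∈ pairUnion N T ↔ j ∈ T := by
  rw [mem_pairUnion]
  constructor
  · rintro ⟨i, hi, h⟩
    rwa [Fin.ext (by omega : j.1 = i.1)]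
  · exact fun hj => ⟨j, hj, .inl rfl⟩

theorem pairUnion_injective (N : ℤ) (K : ℕ) :
    Function.Injective (pairUnion N : Finset (Fin K) → Finset ℤ) := fun _ _ h => ext fun j => by
  rw [← add_two_mul_add_two_mem_pairUnion_iff (N := N), h, add_two_mul_add_two_mem_pairUnion_iff]

theorem card_filter_lt_pairAt_mod_two (j : ℕ) :
    #{z ∈ pairAt N j | w < z} % 2 = if w = N + 2 * j + 2 then 1 else 0 := by
  rw [pairAt, filter_insert, filter_singleton]
  split_ifs <;> simp_all <;> omega

theorem card_filter_lt_pairUnion (T : Finset (Fin K)) :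
    #{z ∈ pairUnion N T | w < z} = ∑ j ∈ T, #{z ∈ pairAt N j | w < z} := by
  rw [pairUnion, filter_biUnion, card_biUnion]
  exact fun i hi j hj hij => disjoint_filter_filter (pairwiseDisjoint_pairAt T hi hj hij)

theorem card_filter_lt_pairUnion_mod_two_of_notMem (hw : w ∉ pairUnion N T) :
    #{z ∈ pairUnion N T | w < z} % 2 = 0 := by
  rw [card_filter_lt_pairUnion, sum_nat_mod, sum_eq_zero, Nat.zero_mod]
  intro j hj
  rw [card_filter_lt_pairAt_mod_two, if_neg fun h => hw (mem_pairUnion.mpr ⟨j, hj, .inl h⟩)]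

theorem card_filter_lt_pairUnion_mod_two_of_mem (hw : w ∈ pairUnion N T) :
    (#{z ∈ pairUnion N T | w < z} : ℤ) % 2 = (w - N - 1) % 2 := by
  obtain ⟨j₀, hj₀, hw₀⟩ := mem_pairUnion.mp hw
  have hrest : (∑ j ∈ T.erase j₀, #{z ∈ pairAt N j | w < z}) % 2 = 0 := by
    rw [sum_nat_mod, sum_eq_zero, Nat.zero_mod]
    intro j hj
    have := Fin.val_injective.ne (ne_of_mem_erase hj)
    rw [card_filter_lt_pairAt_mod_two, if_neg (by omega)]
  have h₀ := card_filter_lt_pairAt_mod_two (N := N) (w := w) j₀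
  rw [card_filter_lt_pairUnion, ← add_sum_erase _ _ hj₀]
  split_ifs at h₀ <;> omega

end Pairs

structure IsParityAdapted (N : ℤ) (k : ℕ) (X : Finset ℤ) : Prop where
  subset_Icc : X ⊆ Icc (N + 1) (N + 2 * k)
  parity_of_mem : ∀ w ∈ X, (#{z ∈ X | w < z} : ℤ) % 2 = (w - N - 1) % 2
  parity_of_notMem : ∀ w ∈ Icc (N + 1) (N + 2 * k) \ X, #{z ∈ X | w < z} % 2 = 0

theorem isParityAdapted_pairUnion (N : ℤ) {k : ℕ} (T : Finset (Fin (k - 1))) :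
    IsParityAdapted N k (pairUnion N T) where
  subset_Icc w hw := by
    obtain ⟨j, -, hj⟩ := mem_pairUnion.mp hw
    have := j.isLt
    rw [mem_Icc]
    omega
  parity_of_mem _ := card_filter_lt_pairUnion_mod_two_of_mem
  parity_of_notMem _ hw := card_filter_lt_pairUnion_mod_two_of_notMem (mem_sdiff.mp hw).2

namespace IsParityAdapted

variable {N : ℤ} {k : ℕ} {X : Finset ℤ}

theorem add_two_mul_add_two_mem_iff (hX : IsParityAdapted N k X) {j : ℕ} (hj : j + 1 < k) :
    N + 2 * j + 2 ∈ X ↔ N + 2 * j + 3 ∈ X := by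
  have hstep := card_filter_lt_eq_card_filter_succ_lt_add X (N + 2 * j + 2)
  have hout (w : ℤ) (hw : w ∉ X) (h₁ : N + 2 ≤ w) (h₂ : w ≤ N + 2 * j + 3) :=
    hX.parity_of_notMem w (mem_sdiff.mpr ⟨mem_Icc.mpr ⟨by omega, by omega⟩, hw⟩)
  rw [show N + 2 * j + 2 + 1 = N + 2 * j + 3 by ring] at hstep
  constructor
  · intro h₂
    by_contra h₃
    have := hX.parity_of_mem _ h₂
    have := hout _ h₃ (by omega) le_rfl
    rw [if_neg h₃] at hstep
    omega
  · intro h₃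
    by_contra h₂
    have := hX.parity_of_mem _ h₃
    have := hout _ h₂ (by omega) (by omega)
    rw [if_pos h₃] at hstep
    omega

theorem top_notMem (hX : IsParityAdapted N k X) : N + 2 * k ∉ X := fun h => by
  have hempty : #{z ∈ X | N + 2 * k < z} = 0 := card_eq_zero.mpr <|
    filter_eq_empty_iff.mpr fun z hz => by have := mem_Icc.mp (hX.subset_Icc hz); omega
  have := hX.parity_of_mem _ h
  rw [hempty] at this
  omega

theorem bottom_notMem (hX : IsParityAdapted N k X) (hcard : Even #X) : N + 1 ∉ X := fun h => by
  have herase : {z ∈ X | N + 1 < z} = X.erase (N + 1) := by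
    ext z
    simp only [mem_filter, mem_erase]
    constructor
    · rintro ⟨hz, hlt⟩
      exact ⟨by omega, hz⟩
    · rintro ⟨hne, hz⟩
      exact ⟨hz, by have := mem_Icc.mp (hX.subset_Icc hz); omega⟩
  have := hX.parity_of_mem _ h
  rw [herase, card_erase_of_mem h] at this
  obtain ⟨r, hr⟩ := hcard
  have := card_pos.mpr ⟨_, h⟩
  omega

theorem exists_eq_pairUnion (hX : IsParityAdapted N k X) (hcard : Even #X) :
    ∃ T : Finset (Fin (k - 1)), X = pairUnion N T := by
  refine ⟨({j | N + 2 * (j : ℕ) + 2 ∈ X} : Finset (Fin (k - 1))), ext fun w => ?_⟩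
  simp only [mem_pairUnion, mem_filter, mem_univ, true_and]
  constructor
  · intro hw
    have := mem_Icc.mp (hX.subset_Icc hw)
    have : w ≠ N + 1 := fun h => hX.bottom_notMem hcard (h ▸ hw)
    have : w ≠ N + 2 * k := fun h => hX.top_notMem (h ▸ hw)
    obtain ⟨j, hj⟩ : ∃ j : ℕ, w = N + 2 * j + 2 ∨ w = N + 2 * j + 3 :=
      ⟨((w - N - 2) / 2).toNat, by omega⟩
    refine ⟨⟨j, by omega⟩, ?_, hj⟩
    rcases hj with rfl | rfl
    · exact hw
    · exact (hX.add_two_mul_add_two_mem_iff (by omega)).mpr hw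
  · rintro ⟨j, hj, rfl | rfl⟩
    · exact hj
    · exact (hX.add_two_mul_add_two_mem_iff (by omega)).mp hj

end IsParityAdapted

namespace RedSol

variable {n u v p q ε η : ℕ}

theorem image_y_eq (R : RedSol n u v p q ε η) :
    univ.image R.y = Icc ((u : ℤ) + v + 1) n \ univ.image R.x := by
  rw [← R.uni, union_sdiff_cancel_left R.disj]

theorem ext_of_image_x_eq {R R' : RedSol n u v p q ε η}
    (h : univ.image R.x = univ.image R'.x) : R = R' := by
  have hx := eq_of_strictAnti_of_image_eq R.x_anti R'.x_anti h
  have hy := eq_of_strictAnti_of_image_eq R.y_anti R'.y_anti (by rw [image_y_eq, image_y_eq, h])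
  have hb : R.b = R'.b := funext fun i => by
    have := R.hx i
    have := R'.hx i
    rw [hx] at *
    omega
  have ha : R.a = R'.a := funext fun m => by
    have := R.hy m
    have := R'.hy m
    rw [hy] at *
    omega
  cases R
  cases R'
  simp only at hx hy hb ha
  subst hx hy hb ha
  rfl

theorem isParityAdapted_image_x {k : ℕ} (R : RedSol n u v p q ε η) (hn : 2 * k + u + v = n)
    (hp : p % 2 = 0) (hq : q % 2 = 0) (hvη : (v + η) % 2 = 1) (huε : (u + ε) % 2 = 1) :
    IsParityAdapted (u + v) k (univ.image R.x) := by
  have hn' : (n : ℤ) = u + v + 2 * k := by omega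
  have hY : univ.image R.y = Icc ((u : ℤ) + v + 1) (u + v + 2 * k) \ univ.image R.x :=
    hn' ▸ R.image_y_eq
  have hX : univ.image R.x ⊆ Icc ((u : ℤ) + v + 1) (u + v + 2 * k) :=
    hn' ▸ R.uni ▸ subset_union_left
  refine ⟨hX, ?_, fun w hw => ?_⟩
  · simp only [mem_image, mem_univ, true_and, forall_exists_index, forall_apply_eq_imp_iff]
    intro i
    rw [card_filter_lt_apply_of_strictAnti R.x_anti, R.hx i]
    omega
  · rw [← hY] at hw
    obtain ⟨m, -, rfl⟩ := mem_image.mp hw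
    have := val_add_card_filter_lt_of_image_eq_sdiff hX R.y_anti hY m
    have := R.hy m
    omega

theorem exists_image_x_eq {k : ℕ} {X : Finset ℤ} (hX : IsParityAdapted (u + v) k X)
    (hcard : #X = q) (hn : 2 * k + u + v = n) (hpq : p + q = 2 * k) (hq : q % 2 = 0)
    (hε : ε ≤ 1) (hη : η ≤ 1) (hvη : (v + η) % 2 = 1) (huε : (u + ε) % 2 = 1) :
    ∃ R : RedSol n u v p q ε η, univ.image R.x = X := by
  have hbot := hX.bottom_notMem (hcard ▸ Nat.even_iff.mpr hq)
  obtain ⟨x, x_anti, hx⟩ := exists_strictAnti_image_eq hcard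
  obtain ⟨y, y_anti, hy⟩ := exists_strictAnti_image_eq
    (show #(Icc ((u : ℤ) + v + 1) (u + v + 2 * k) \ X) = p by
      rw [card_sdiff_of_subset hX.subset_Icc, Int.card_Icc, hcard]
      omega)
  have x_mem (i : Fin q) : x i ∈ X := hx ▸ mem_image_of_mem x (mem_univ i)
  have x_bound (i : Fin q) : u + v + 2 ≤ x i := by
    have := mem_Icc.mp (hX.subset_Icc (x_mem i))
    have : x i ≠ u + v + 1 := fun h => hbot (h ▸ x_mem i)
    omega
  have y_bound (m : Fin p) : u + v + 1 ≤ y m :=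
    (mem_Icc.mp (mem_sdiff.mp (hy ▸ mem_image_of_mem y (mem_univ m))).1).1
  obtain ⟨b, b_anti, b_nonneg, hb⟩ :=
    exists_antitone_nonneg_of_strictAnti x_anti (u + q + η) (fun i => by
      have := hX.parity_of_mem _ (x_mem i)
      rw [← hx, card_filter_lt_apply_of_strictAnti x_anti] at this
      omega) fun i => by linarith [x_bound i]
  obtain ⟨a, a_anti, a_nonneg, ha⟩ :=
    exists_antitone_nonneg_of_strictAnti y_anti (v + p - 1 + ε) (fun m => by
      have := val_add_card_filter_lt_of_image_eq_sdiff hX.subset_Icc y_anti hy m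
      have := hX.parity_of_notMem _ (hy ▸ mem_image_of_mem y (mem_univ m))
      omega) fun m => by linarith [y_bound m]
  refine ⟨⟨x, y, b, a, x_anti, y_anti, fun i => by linarith [x_bound i],
    fun m => by linarith [y_bound m], ?_, ?_, b_anti, a_anti, b_nonneg, a_nonneg,
    fun i => by rw [hb i]; ring, fun m => by rw [ha m]; ring⟩, hx⟩
  · rw [hx, hy]
    exact disjoint_sdiff
  · rw [hx, hy, union_sdiff_of_subset hX.subset_Icc]
    congr
    omega

end RedSol

theorem stmt8_general (n k u v p q ε η : ℕ) (hn : 2 * k + u + v = n)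
    (hpq : p + q = 2 * k) (hε : ε ≤ 1) (hη : η ≤ 1)
    (hpe : p % 2 = 0) (hqe : q % 2 = 0) (hppos : 0 < p)
    (hmod : (ε + η) % 2 = n % 2) (humod : u % 2 = (ε + 1) % 2) :
    Nat.card (RedSol n u v p q ε η) = Nat.choose (k - 1) ((p - 2) / 2) ∧
    Nat.choose (k - 1) ((p - 2) / 2) = Nat.choose (k - 1) (q / 2) := by
  have hvη : (v + η) % 2 = 1 := by omega
  have huε : (u + ε) % 2 = 1 := by omega
  have hchoose : Nat.choose (k - 1) ((p - 2) / 2) = Nat.choose (k - 1) (q / 2) := by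
    rw [show (p - 2) / 2 = k - 1 - q / 2 by omega, Nat.choose_symm (by omega)]
  have hrange : Set.range (fun R : RedSol n u v p q ε η => univ.image R.x) =
      (powersetCard (q / 2) (univ : Finset (Fin (k - 1)))).image (pairUnion (u + v)) := by
    ext X
    simp only [Set.mem_range, coe_image, Set.mem_image, mem_coe, mem_powersetCard, subset_univ,
      true_and]
    constructor
    · rintro ⟨R, rfl⟩
      have hcard : #(univ.image R.x) = q := by
        rw [card_image_of_injective _ R.x_anti.injective, card_univ, Fintype.card_fin]
      obtain ⟨T, hT⟩ := (R.isParityAdapted_image_x hn hpe hqe hvη huε).exists_eq_pairUnion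
        (by rw [hcard]; exact Nat.even_iff.mpr hqe)
      exact ⟨T, by rw [hT, card_pairUnion] at hcard; omega, hT.symm⟩
    · rintro ⟨T, hT, rfl⟩
      exact RedSol.exists_image_x_eq (isParityAdapted_pairUnion _ T)
        (by rw [card_pairUnion]; omega) hn hpq hqe hε hη hvη huε
  refine ⟨?_, hchoose⟩
  rw [hchoose, ← Nat.card_range_of_injective fun _ _ => RedSol.ext_of_image_x_eq, hrange,
    Nat.card_coe_set_eq, Set.ncard_coe_finset, card_image_of_injective _ (pairUnion_injective _ _),
    card_powersetCard, card_univ, Fintype.card_fin]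

/-- Case 1 Ib of the main theorem for Sp(2n,ℝ): `p, q` even and positive, `ε+η ≡ n (mod 2)`,
`u ≡ ε+1 (mod 2)`; the number of reduced solutions is `C(k−1, (p−2)/2) = C(k−1, q/2)`. -/
theorem stmt8 (n k u v p q ε η : ℕ) (hk : 1 ≤ k) (hn : 2 * k + u + v = n)
    (hpq : p + q = 2 * k) (hε : ε ≤ 1) (hη : η ≤ 1)
    (hpe : p % 2 = 0) (hqe : q % 2 = 0) (hppos : 0 < p) (hqpos : 0 < q)
    (hmod : (ε + η) % 2 = n % 2) (humod : u % 2 = (ε + 1) % 2) :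
    Nat.card (RedSol n u v p q ε η) = Nat.choose (k - 1) ((p - 2) / 2) ∧
    Nat.choose (k - 1) ((p - 2) / 2) = Nat.choose (k - 1) (q / 2) :=
  stmt8_general n k u v p q ε η hn hpq hε hη hpe hqe hppos hmod humod
end

section
/- Suppose p and q are even and positive, ε+η ≡ n+1 (mod 2), and u ≡ ε+1 (mod 2). Then the number of reduced solutions for the data (n,k,u,v,p,q,ε,η) equals the binomial coefficient C(k, p/2). -/
/-!
Under the parity hypotheses the first terms `x 0` and `y 0` of a reduced solution have the same
parity, so the two largest elements `n` and `n - 1` of `{u+v+1, …, n}` can never be split between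
the two sequences: they are the first two terms of the same one. Deleting them is a bijection onto
the reduced solutions for `n - 2` with `p` or `q` lowered by two; the same hypotheses make `n` an
admissible first term again, with `a 0 = a 1` resp. `b 0 = b 1`. The count therefore satisfies
Pascal's rule in `(k, p / 2)`, and there is a single (empty) solution when `p = q = 0`.
-/

open Finset

namespace Fin

variable {α : Type*} {r : ℕ}

theorem strictAnti_cons [Preorder α] {a : α} {f : Fin r → α} :
    StrictAnti (Fin.cons a f : Fin (r + 1) → α) ↔ (∀ i, f i < a) ∧ StrictAnti f :=
  Fin.liftFun_cons (· > ·)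

theorem antitone_cons [Preorder α] {a : α} {f : Fin r → α} :
    Antitone (Fin.cons a f : Fin (r + 1) → α) ↔ (∀ i, f i ≤ a) ∧ Antitone f := by
  rw [antitone_iff_forall_lt, antitone_iff_forall_lt]
  exact Fin.liftFun_cons (· ≥ ·)

theorem image_univ_cons [DecidableEq α] (a : α) (f : Fin r → α) :
    univ.image (Fin.cons a f : Fin (r + 1) → α) = insert a (univ.image f) := by
  apply coe_injective
  push_cast [coe_image, coe_univ, Set.image_univ]
  exact Fin.range_cons a f

theorem eq_cons_cons_of_mem_image {f : Fin (r + 2) → ℤ} {T : ℤ} (hf : StrictAnti f)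
    (hle : ∀ i, f i ≤ T) (hT : T ∈ univ.image f) (hT' : T - 1 ∈ univ.image f) :
    f = Fin.cons T (Fin.cons (T - 1) (Fin.tail (Fin.tail f))) := by
  obtain ⟨i, -, hi⟩ := mem_image.1 hT
  obtain ⟨j, -, hj⟩ := mem_image.1 hT'
  have h0 : f 0 = T := le_antisymm (hle 0) (hi ▸ hf.antitone (Fin.zero_le i))
  have hj0 : j ≠ 0 := by rintro rfl; omega
  have h1 : f 1 = T - 1 :=
    le_antisymm (by have := hf (Fin.lt_def.2 (by simp) : (0 : Fin (r + 2)) < 1); omega)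
      (hj ▸ hf.antitone (Fin.one_le_of_ne_zero hj0))
  conv_lhs => rw [← Fin.cons_self_tail f, ← Fin.cons_self_tail (Fin.tail f)]
  simp [Fin.tail, h0, h1]

end Fin

theorem Finset.eq_of_insert_eq_insert {α : Type*} [DecidableEq α] {a : α} {s t : Finset α}
    (hs : a ∉ s) (ht : a ∉ t) (h : insert a s = insert a t) : s = t := by
  rw [← erase_insert hs, h, erase_insert ht]

theorem Finset.Icc_add_two_eq_insert_insert {L M : ℤ} (h : L ≤ M + 1) :
    Icc L (M + 2) = insert (M + 2) (insert (M + 1) (Icc L M)) := by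
  rw [show M + 2 = M + 1 + 1 by ring, insert_Icc_right_eq_Icc_add_one h,
    insert_Icc_right_eq_Icc_add_one (by omega)]

theorem Finset.eq_Icc_of_insert_insert_eq_Icc {S : Finset ℤ} {L M : ℤ} (hL : L ≤ M + 1)
    (h2 : M + 2 ∉ S) (h1 : M + 1 ∉ S) (h : insert (M + 2) (insert (M + 1) S) = Icc L (M + 2)) :
    S = Icc L M := by
  rw [Icc_add_two_eq_insert_insert hL] at h
  exact eq_of_insert_eq_insert h1 (by simp) (eq_of_insert_eq_insert (by simp [h2]) (by simp) h)

namespace RedSol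

variable {n u v p q ε η : ℕ}

theorem ext_of_x_y {s t : RedSol n u v p q ε η} (hx : s.x = t.x) (hy : s.y = t.y) : s = t := by
  have hb : s.b = t.b := funext fun i => by have := s.hx i; have := t.hx i; rw [hx] at *; omega
  have ha : s.a = t.a := funext fun j => by have := s.hy j; have := t.hy j; rw [hy] at *; omega
  cases s; cases t
  subst hx hy hb ha
  rfl

theorem x_mem_Icc (s : RedSol n u v p q ε η) (i : Fin q) : s.x i ∈ Icc ((u : ℤ) + v + 1) n :=
  s.uni ▸ mem_union_left _ (mem_image_of_mem _ (mem_univ i))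

theorem y_mem_Icc (s : RedSol n u v p q ε η) (j : Fin p) : s.y j ∈ Icc ((u : ℤ) + v + 1) n :=
  s.uni ▸ mem_union_right _ (mem_image_of_mem _ (mem_univ j))

theorem x_le (s : RedSol n u v p q ε η) (i : Fin q) : s.x i ≤ n := (mem_Icc.1 (s.x_mem_Icc i)).2

theorem y_le (s : RedSol n u v p q ε η) (j : Fin p) : s.y j ≤ n := (mem_Icc.1 (s.y_mem_Icc j)).2

theorem x_ne_y (s : RedSol n u v p q ε η) (i : Fin q) (j : Fin p) : s.x i ≠ s.y j := fun h =>
  disjoint_left.1 s.disj (mem_image_of_mem _ (mem_univ i)) (h ▸ mem_image_of_mem _ (mem_univ j))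

instance : Finite (RedSol n u v p q ε η) :=
  Finite.of_injective
    (fun s => ((fun i => ⟨s.x i, s.x_mem_Icc i⟩ : Fin q → Icc ((u : ℤ) + v + 1) n),
      (fun j => ⟨s.y j, s.y_mem_Icc j⟩ : Fin p → Icc ((u : ℤ) + v + 1) n)))
    fun s t h => by
      simp only [Prod.mk.injEq, funext_iff, Subtype.mk.injEq] at h
      exact ext_of_x_y (funext h.1) (funext h.2)

theorem card_zero_zero (hn : u + v = n) : Nat.card (RedSol n u v 0 0 ε η) = 1 := by
  refine Nat.card_eq_one_iff_unique.2
    ⟨⟨fun s t => ext_of_x_y (Subsingleton.elim _ _) (Subsingleton.elim _ _)⟩, ⟨?_⟩⟩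
  exact
    { x := Fin.elim0, y := Fin.elim0, b := Fin.elim0, a := Fin.elim0
      x_anti := fun i => i.elim0, y_anti := fun j => j.elim0
      x_pos := fun i => i.elim0, y_pos := fun j => j.elim0
      disj := by simp
      uni := by subst hn; simp
      b_anti := fun i => i.elim0, a_anti := fun j => j.elim0
      b_nonneg := fun i => i.elim0, a_nonneg := fun j => j.elim0
      hx := fun i => i.elim0, hy := fun j => j.elim0 }

theorem x_add_modEq_y_add (hu : (u + q + ε) % 2 = 1) (hv : (v + p + η) % 2 = 0)
    (s : RedSol n u v p q ε η) (i : Fin q) (j : Fin p) :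
    s.x i + i ≡ s.y j + j [ZMOD 2] := by
  rw [Int.modEq_iff_dvd]
  have := s.hx i
  have := s.hy j
  omega

theorem mem_image_x_or_y (s : RedSol n u v p q ε η) {z : ℤ} (h1 : (u : ℤ) + v + 1 ≤ z)
    (h2 : z ≤ n) : z ∈ univ.image s.x ∨ z ∈ univ.image s.y :=
  mem_union.1 (s.uni ▸ mem_Icc.2 ⟨h1, h2⟩)

def TopInY (s : RedSol n u v p q ε η) : Prop := (n : ℤ) ∈ univ.image s.y

theorem y_lt_of_sub_one_le_x (hu : (u + q + ε) % 2 = 1) (hv : (v + p + η) % 2 = 0)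
    (s : RedSol n u v p q ε η) (i : Fin q) (j : Fin p) (hi : (n : ℤ) - 1 ≤ s.x i) :
    s.y j < n - 1 := by
  by_contra! hj
  have hx := s.x_anti.antitone (show (⟨0, i.pos⟩ : Fin q) ≤ i from Nat.zero_le _)
  have hy := s.y_anti.antitone (show (⟨0, j.pos⟩ : Fin p) ≤ j from Nat.zero_le _)
  have hxy := Int.modEq_iff_dvd.1 (s.x_add_modEq_y_add hu hv ⟨0, i.pos⟩ ⟨0, j.pos⟩)
  have := s.x_le ⟨0, i.pos⟩
  have := s.y_le ⟨0, j.pos⟩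
  have := s.x_ne_y ⟨0, i.pos⟩ ⟨0, j.pos⟩
  simp only [Nat.cast_zero, add_zero] at hxy
  omega

theorem y_eq_cons_of_topInY (hu : (u + q + ε) % 2 = 1) (hv : (v + p + η) % 2 = 0)
    (hn : u + v ≤ n) (s : RedSol (n + 2) u v (p + 2) q ε η) (htop : s.TopInY) :
    s.y = Fin.cons ((n : ℤ) + 2) (Fin.cons ((n : ℤ) + 1) (Fin.tail (Fin.tail s.y))) := by
  have hle : ∀ j, s.y j ≤ (n : ℤ) + 2 := fun j => by simpa using s.y_le j
  have htop' : (n : ℤ) + 2 ∈ univ.image s.y := by simpa [TopInY] using htop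
  have hsnd : (n : ℤ) + 2 - 1 ∈ univ.image s.y := by
    refine (s.mem_image_x_or_y (by omega) (by push_cast; omega)).resolve_left fun hx => ?_
    obtain ⟨i, -, hi⟩ := mem_image.1 hx
    obtain ⟨j, -, hj⟩ := mem_image.1 htop'
    have := s.y_lt_of_sub_one_le_x (by omega) (by omega) i j (by push_cast; omega)
    omega
  rw [show (n : ℤ) + 1 = n + 2 - 1 by ring]
  exact Fin.eq_cons_cons_of_mem_image s.y_anti hle htop' hsnd

theorem x_eq_cons_of_not_topInY (hu : (u + q + ε) % 2 = 1) (hv : (v + p + η) % 2 = 0)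
    (hn : u + v ≤ n) (s : RedSol (n + 2) u v p (q + 2) ε η) (htop : ¬ s.TopInY) :
    s.x = Fin.cons ((n : ℤ) + 2) (Fin.cons ((n : ℤ) + 1) (Fin.tail (Fin.tail s.x))) := by
  have hle : ∀ i, s.x i ≤ (n : ℤ) + 2 := fun i => by simpa using s.x_le i
  have htop' : (n : ℤ) + 2 ∈ univ.image s.x :=
    (s.mem_image_x_or_y (by omega) (by push_cast; omega)).resolve_right
      (by simpa [TopInY] using htop)
  have hsnd : (n : ℤ) + 2 - 1 ∈ univ.image s.x := by
    refine (s.mem_image_x_or_y (by omega) (by push_cast; omega)).resolve_right fun hy => ?_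
    obtain ⟨j, -, hj⟩ := mem_image.1 hy
    obtain ⟨i, -, hi⟩ := mem_image.1 htop'
    have := s.y_lt_of_sub_one_le_x (by omega) (by omega) i j (by push_cast; omega)
    omega
  rw [show (n : ℤ) + 1 = n + 2 - 1 by ring]
  exact Fin.eq_cons_cons_of_mem_image s.x_anti hle htop' hsnd

theorem two_mul_a_le (s : RedSol n u v p q ε η) (j : Fin p) :
    2 * s.a j ≤ n + 1 - v - p - ε := by
  have := s.a_anti (show (⟨0, j.pos⟩ : Fin p) ≤ j from Nat.zero_le _)
  have := s.hy ⟨0, j.pos⟩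
  have := s.y_le ⟨0, j.pos⟩
  simp only [Nat.cast_zero, sub_zero] at *
  omega

theorem two_mul_b_le (s : RedSol n u v p q ε η) (i : Fin q) :
    2 * s.b i ≤ n - u - q - η := by
  have := s.b_anti (show (⟨0, i.pos⟩ : Fin q) ≤ i from Nat.zero_le _)
  have := s.hx ⟨0, i.pos⟩
  have := s.x_le ⟨0, i.pos⟩
  simp only [Nat.cast_zero, sub_zero] at *
  omega

def consY (hn : u + v + p + q = n) (hε : ε ≤ 1) (hu : (u + q + ε) % 2 = 1)
    (t : RedSol n u v p q ε η) : RedSol (n + 2) u v (p + 2) q ε η where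
  x := t.x
  y := Fin.cons ((n : ℤ) + 2) (Fin.cons ((n : ℤ) + 1) t.y)
  b := t.b
  -- the common value of `a 0` and `a 1` forced by `y 0 = n + 2`; `hu` makes the division exact
  a := Fin.cons (((n : ℤ) + 1 - v - p - ε) / 2) (Fin.cons (((n : ℤ) + 1 - v - p - ε) / 2) t.a)
  x_anti := t.x_anti
  y_anti := by
    simp only [Fin.strictAnti_cons, Fin.forall_iff_succ, Fin.cons_zero, Fin.cons_succ]
    exact ⟨⟨by omega, fun j => by have := t.y_le j; omega⟩,
      fun j => by have := t.y_le j; omega, t.y_anti⟩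
  x_pos := t.x_pos
  y_pos := by
    simp only [Fin.forall_iff_succ, Fin.cons_zero, Fin.cons_succ]
    exact ⟨by positivity, by positivity, t.y_pos⟩
  disj := by
    rw [Fin.image_univ_cons, Fin.image_univ_cons, disjoint_insert_right, disjoint_insert_right]
    refine ⟨fun h => ?_, fun h => ?_, t.disj⟩ <;>
    · obtain ⟨i, -, hi⟩ := mem_image.1 h
      have := t.x_le i
      omega
  uni := by
    rw [Fin.image_univ_cons, Fin.image_univ_cons, union_insert, union_insert, t.uni,
      Nat.cast_add, Nat.cast_two, Icc_add_two_eq_insert_insert (by omega)]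
  b_anti := t.b_anti
  a_anti := by
    simp only [Fin.antitone_cons, Fin.forall_iff_succ, Fin.cons_zero, Fin.cons_succ]
    exact ⟨⟨le_rfl, fun j => by have := t.two_mul_a_le j; omega⟩,
      fun j => by have := t.two_mul_a_le j; omega, t.a_anti⟩
  b_nonneg := t.b_nonneg
  a_nonneg := by
    simp only [Fin.forall_iff_succ, Fin.cons_zero, Fin.cons_succ]
    exact ⟨by omega, by omega, t.a_nonneg⟩
  hx := t.hx
  hy := by
    simp only [Fin.forall_iff_succ, Fin.cons_zero, Fin.cons_succ, Fin.val_zero, Fin.val_succ]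
    push_cast
    exact ⟨by omega, by omega, fun j => by have := t.hy j; omega⟩

theorem consY_topInY (hn : u + v + p + q = n) (hε : ε ≤ 1) (hu : (u + q + ε) % 2 = 1)
    (t : RedSol n u v p q ε η) : (consY hn hε hu t).TopInY := by
  simp [TopInY, consY, Fin.image_univ_cons]

def tailY (hn : u + v + p + q = n) (hu : (u + q + ε) % 2 = 1) (hv : (v + p + η) % 2 = 0)
    (s : RedSol (n + 2) u v (p + 2) q ε η) (htop : s.TopInY) : RedSol n u v p q ε η :=
  have hcons := y_eq_cons_of_topInY hu hv (by omega) s htop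
  { x := s.x
    y := Fin.tail (Fin.tail s.y)
    b := s.b
    a := Fin.tail (Fin.tail s.a)
    x_anti := s.x_anti
    y_anti := s.y_anti.comp_strictMono (Fin.strictMono_succ.comp Fin.strictMono_succ)
    x_pos := s.x_pos
    y_pos := fun j => s.y_pos _
    disj := by
      have h := s.disj
      rw [hcons, Fin.image_univ_cons, Fin.image_univ_cons, disjoint_insert_right,
        disjoint_insert_right] at h
      exact h.2.2
    uni := by
      have hanti := s.y_anti
      have hdisj := s.disj
      have huni := s.uni
      rw [hcons, Fin.strictAnti_cons, Fin.strictAnti_cons] at hanti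
      rw [hcons, Fin.image_univ_cons, Fin.image_univ_cons] at hdisj huni
      rw [disjoint_insert_right, disjoint_insert_right] at hdisj
      rw [union_insert, union_insert, Nat.cast_add, Nat.cast_two] at huni
      have hlt : ∀ z ∈ univ.image (Fin.tail (Fin.tail s.y)), z < (n : ℤ) + 1 := by
        simpa using hanti.2.1
      refine eq_Icc_of_insert_insert_eq_Icc (by omega) ?_ ?_ huni <;> rw [mem_union, not_or]
      · exact ⟨hdisj.1, fun h => by have := hlt _ h; omega⟩
      · exact ⟨hdisj.2.1, fun h => by have := hlt _ h; omega⟩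
    b_anti := s.b_anti
    a_anti := s.a_anti.comp_monotone (Fin.strictMono_succ.comp Fin.strictMono_succ).monotone
    b_nonneg := s.b_nonneg
    a_nonneg := fun j => s.a_nonneg _
    hx := s.hx
    hy := fun j => by
      have := s.hy j.succ.succ
      simp only [Fin.val_succ] at this
      simp only [Fin.tail]
      push_cast at this
      omega }

def topInYEquiv (hn : u + v + p + q = n) (hε : ε ≤ 1) (hu : (u + q + ε) % 2 = 1)
    (hv : (v + p + η) % 2 = 0) :
    {s : RedSol (n + 2) u v (p + 2) q ε η // s.TopInY} ≃ RedSol n u v p q ε η where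
  toFun s := tailY hn hu hv s.1 s.2
  invFun t := ⟨consY hn hε hu t, consY_topInY hn hε hu t⟩
  left_inv s := Subtype.ext (ext_of_x_y rfl (y_eq_cons_of_topInY hu hv (by omega) s.1 s.2).symm)
  right_inv t := ext_of_x_y rfl rfl

def consX (hn : u + v + p + q = n) (hη : η ≤ 1) (hv : (v + p + η) % 2 = 0)
    (t : RedSol n u v p q ε η) : RedSol (n + 2) u v p (q + 2) ε η where
  x := Fin.cons ((n : ℤ) + 2) (Fin.cons ((n : ℤ) + 1) t.x)
  y := t.y
  b := Fin.cons (((n : ℤ) - u - q - η) / 2) (Fin.cons (((n : ℤ) - u - q - η) / 2) t.b)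
  a := t.a
  x_anti := by
    simp only [Fin.strictAnti_cons, Fin.forall_iff_succ, Fin.cons_zero, Fin.cons_succ]
    exact ⟨⟨by omega, fun i => by have := t.x_le i; omega⟩,
      fun i => by have := t.x_le i; omega, t.x_anti⟩
  y_anti := t.y_anti
  x_pos := by
    simp only [Fin.forall_iff_succ, Fin.cons_zero, Fin.cons_succ]
    exact ⟨by positivity, by positivity, t.x_pos⟩
  y_pos := t.y_pos
  disj := by
    rw [Fin.image_univ_cons, Fin.image_univ_cons, disjoint_insert_left, disjoint_insert_left]
    refine ⟨fun h => ?_, fun h => ?_, t.disj⟩ <;>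
    · obtain ⟨j, -, hj⟩ := mem_image.1 h
      have := t.y_le j
      omega
  uni := by
    rw [Fin.image_univ_cons, Fin.image_univ_cons, insert_union, insert_union, t.uni,
      Nat.cast_add, Nat.cast_two, Icc_add_two_eq_insert_insert (by omega)]
  b_anti := by
    simp only [Fin.antitone_cons, Fin.forall_iff_succ, Fin.cons_zero, Fin.cons_succ]
    exact ⟨⟨le_rfl, fun i => by have := t.two_mul_b_le i; omega⟩,
      fun i => by have := t.two_mul_b_le i; omega, t.b_anti⟩
  a_anti := t.a_anti
  b_nonneg := by
    simp only [Fin.forall_iff_succ, Fin.cons_zero, Fin.cons_succ]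
    exact ⟨by omega, by omega, t.b_nonneg⟩
  a_nonneg := t.a_nonneg
  hx := by
    simp only [Fin.forall_iff_succ, Fin.cons_zero, Fin.cons_succ, Fin.val_zero, Fin.val_succ]
    push_cast
    exact ⟨by omega, by omega, fun i => by have := t.hx i; omega⟩
  hy := t.hy

theorem consX_not_topInY (hn : u + v + p + q = n) (hη : η ≤ 1) (hv : (v + p + η) % 2 = 0)
    (t : RedSol n u v p q ε η) : ¬ (consX hn hη hv t).TopInY := fun h => by
  obtain ⟨j, -, hj⟩ := mem_image.1 h
  have := t.y_le j
  simp only [consX] at hj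
  omega

def tailX (hn : u + v + p + q = n) (hu : (u + q + ε) % 2 = 1) (hv : (v + p + η) % 2 = 0)
    (s : RedSol (n + 2) u v p (q + 2) ε η) (htop : ¬ s.TopInY) : RedSol n u v p q ε η :=
  have hcons := x_eq_cons_of_not_topInY hu hv (by omega) s htop
  { x := Fin.tail (Fin.tail s.x)
    y := s.y
    b := Fin.tail (Fin.tail s.b)
    a := s.a
    x_anti := s.x_anti.comp_strictMono (Fin.strictMono_succ.comp Fin.strictMono_succ)
    y_anti := s.y_anti
    x_pos := fun i => s.x_pos _
    y_pos := s.y_pos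
    disj := by
      have h := s.disj
      rw [hcons, Fin.image_univ_cons, Fin.image_univ_cons, disjoint_insert_left,
        disjoint_insert_left] at h
      exact h.2.2
    uni := by
      have hanti := s.x_anti
      have hdisj := s.disj
      have huni := s.uni
      rw [hcons, Fin.strictAnti_cons, Fin.strictAnti_cons] at hanti
      rw [hcons, Fin.image_univ_cons, Fin.image_univ_cons] at hdisj huni
      rw [disjoint_insert_left, disjoint_insert_left] at hdisj
      rw [insert_union, insert_union, Nat.cast_add, Nat.cast_two] at huni
      have hlt : ∀ z ∈ univ.image (Fin.tail (Fin.tail s.x)), z < (n : ℤ) + 1 := by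
        simpa using hanti.2.1
      refine eq_Icc_of_insert_insert_eq_Icc (by omega) ?_ ?_ huni <;> rw [mem_union, not_or]
      · exact ⟨fun h => by have := hlt _ h; omega, hdisj.1⟩
      · exact ⟨fun h => by have := hlt _ h; omega, hdisj.2.1⟩
    b_anti := s.b_anti.comp_monotone (Fin.strictMono_succ.comp Fin.strictMono_succ).monotone
    a_anti := s.a_anti
    b_nonneg := fun i => s.b_nonneg _
    a_nonneg := s.a_nonneg
    hx := fun i => by
      have := s.hx i.succ.succ
      simp only [Fin.val_succ] at this
      simp only [Fin.tail]
      push_cast at this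
      omega
    hy := s.hy }

def notTopInYEquiv (hn : u + v + p + q = n) (hη : η ≤ 1) (hu : (u + q + ε) % 2 = 1)
    (hv : (v + p + η) % 2 = 0) :
    {s : RedSol (n + 2) u v p (q + 2) ε η // ¬ s.TopInY} ≃ RedSol n u v p q ε η where
  toFun s := tailX hn hu hv s.1 s.2
  invFun t := ⟨consX hn hη hv t, consX_not_topInY hn hη hv t⟩
  left_inv s :=
    Subtype.ext (ext_of_x_y (x_eq_cons_of_not_topInY hu hv (by omega) s.1 s.2).symm rfl)
  right_inv t := ext_of_x_y rfl rfl

theorem card_eq_card_topInY_add :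
    Nat.card (RedSol n u v p q ε η) =
      Nat.card {s : RedSol n u v p q ε η // s.TopInY} +
        Nat.card {s : RedSol n u v p q ε η // ¬ s.TopInY} := by
  classical
  rw [← Nat.card_sum]
  exact Nat.card_congr (Equiv.sumCompl _).symm

theorem card_topInY_of_p_zero : Nat.card {s : RedSol n u v 0 q ε η // s.TopInY} = 0 := by
  have : IsEmpty {s : RedSol n u v 0 q ε η // s.TopInY} :=
    ⟨fun s => by simpa [TopInY] using s.2⟩
  exact Nat.card_of_isEmpty

theorem card_not_topInY_of_q_zero (hn : u + v < n) :
    Nat.card {s : RedSol n u v p 0 ε η // ¬ s.TopInY} = 0 := by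
  have : IsEmpty {s : RedSol n u v p 0 ε η // ¬ s.TopInY} :=
    ⟨fun s => s.2 ((s.1.mem_image_x_or_y (by omega) le_rfl).resolve_left (by simp))⟩
  exact Nat.card_of_isEmpty

theorem card_eq_choose (hε : ε ≤ 1) (hη : η ≤ 1) (hu : (u + ε) % 2 = 1)
    (hv : (v + η) % 2 = 0) (k n p q : ℕ) (hn : u + v + p + q = n) (hp : p % 2 = 0)
    (hq : q % 2 = 0) (hpq : p + q = 2 * k) :
    Nat.card (RedSol n u v p q ε η) = k.choose (p / 2) := by
  induction k generalizing n p q with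
  | zero =>
    obtain ⟨rfl, rfl⟩ : p = 0 ∧ q = 0 := by omega
    exact card_zero_zero (by omega)
  | succ k ih =>
    obtain ⟨n, rfl⟩ : ∃ n', n = n' + 2 := ⟨n - 2, by omega⟩
    rw [card_eq_card_topInY_add]
    rcases p with _ | _ | p
    · obtain ⟨q, rfl⟩ : ∃ q', q = q' + 2 := ⟨q - 2, by omega⟩
      rw [card_topInY_of_p_zero,
        Nat.card_congr (notTopInYEquiv (by omega) hη (by omega) (by omega)),
        ih n 0 q (by omega) hp (by omega) (by omega)]
      simp
    · omega
    rw [Nat.card_congr (topInYEquiv (by omega) hε (by omega) (by omega)),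
      ih n p q (by omega) (by omega) hq (by omega), show (p + 2) / 2 = p / 2 + 1 by omega,
      Nat.choose_succ_succ]
    rcases q with _ | _ | q
    · rw [card_not_topInY_of_q_zero (by omega),
        Nat.choose_eq_zero_of_lt (show k < p / 2 + 1 by omega)]
    · omega
    · rw [Nat.card_congr (notTopInYEquiv (by omega) hη (by omega) (by omega)),
        ih n (p + 2) q (by omega) (by omega) (by omega) (by omega),
        show (p + 2) / 2 = p / 2 + 1 by omega]

end RedSol

theorem stmt9_general (n k u v p q ε η : ℕ) (hn : 2 * k + u + v = n)
    (hpq : p + q = 2 * k) (hε : ε ≤ 1) (hη : η ≤ 1)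
    (hpe : p % 2 = 0) (hqe : q % 2 = 0)
    (hmod : (ε + η) % 2 = (n + 1) % 2) (humod : u % 2 = (ε + 1) % 2) :
    Nat.card (RedSol n u v p q ε η) = Nat.choose k (p / 2) :=
  RedSol.card_eq_choose hε hη (by omega) (by omega) k n p q (by omega) hpe hqe hpq

/-- Case 1 IIa of the main theorem for Sp(2n,ℝ): `p, q` even and positive,
`ε+η ≡ n+1 (mod 2)`, `u ≡ ε+1 (mod 2)`; the number of reduced solutions is `C(k, p/2)`. -/
theorem stmt9 (n k u v p q ε η : ℕ) (hk : 1 ≤ k) (hn : 2 * k + u + v = n)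
    (hpq : p + q = 2 * k) (hε : ε ≤ 1) (hη : η ≤ 1)
    (hpe : p % 2 = 0) (hqe : q % 2 = 0) (hppos : 0 < p) (hqpos : 0 < q)
    (hmod : (ε + η) % 2 = (n + 1) % 2) (humod : u % 2 = (ε + 1) % 2) :
    Nat.card (RedSol n u v p q ε η) = Nat.choose k (p / 2) :=
  stmt9_general n k u v p q ε η hn hpq hε hη hpe hqe hmod humod
end

section
/- Suppose p and q are even and positive, ε+η ≡ n+1 (mod 2), and u ≡ ε (mod 2). Then there are no reduced solutions for the data (n,k,u,v,p,q,ε,η): the number of reduced solutions is 0. -/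
/-- Case 1 IIb of the main theorem for Sp(2n,ℝ): `p, q` even and positive,
`ε+η ≡ n+1 (mod 2)`, `u ≡ ε (mod 2)`; there are no reduced solutions. -/
theorem stmt10 (n k u v p q ε η : ℕ) (hk : 1 ≤ k) (hn : 2 * k + u + v = n)
    (hpq : p + q = 2 * k) (hε : ε ≤ 1) (hη : η ≤ 1)
    (hpe : p % 2 = 0) (hqe : q % 2 = 0) (hppos : 0 < p) (hqpos : 0 < q)
    (hmod : (ε + η) % 2 = (n + 1) % 2) (humod : u % 2 = ε % 2) :
    Nat.card (RedSol n u v p q ε η) = 0 := by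
  have hempty : IsEmpty (RedSol n u v p q ε η) := by
    constructor
    intro s
    have hn' : (u : ℤ) + v + 1 ≤ (n : ℤ) := by omega
    have hmem : (n : ℤ) ∈ Finset.Icc ((u : ℤ) + v + 1) (n : ℤ) :=
      Finset.mem_Icc.mpr ⟨hn', le_refl _⟩
    rw [← s.uni, Finset.mem_union] at hmem
    rcases hmem with h | h
    · obtain ⟨i, _, hi⟩ := Finset.mem_image.mp h
      have h0le : s.x ⟨0, hqpos⟩ ≤ (n : ℤ) := by
        have hm : s.x ⟨0, hqpos⟩ ∈ Finset.Icc ((u : ℤ) + v + 1) (n : ℤ) := by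
          rw [← s.uni]
          exact Finset.mem_union_left _ (Finset.mem_image_of_mem _ (Finset.mem_univ _))
        exact (Finset.mem_Icc.mp hm).2
      have hge : s.x i ≤ s.x ⟨0, hqpos⟩ :=
        s.x_anti.antitone (Fin.mk_le_mk.mpr (Nat.zero_le _))
      have hx0 : s.x ⟨0, hqpos⟩ = (n : ℤ) := le_antisymm h0le (hi ▸ hge)
      have hxe := s.hx ⟨0, hqpos⟩
      rw [hx0] at hxe
      simp only [Fin.val_mk, Nat.cast_zero] at hxe
      have hb := s.b_nonneg ⟨0, hqpos⟩
      omega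
    · obtain ⟨m, _, hm⟩ := Finset.mem_image.mp h
      have h0le : s.y ⟨0, hppos⟩ ≤ (n : ℤ) := by
        have hmm : s.y ⟨0, hppos⟩ ∈ Finset.Icc ((u : ℤ) + v + 1) (n : ℤ) := by
          rw [← s.uni]
          exact Finset.mem_union_right _ (Finset.mem_image_of_mem _ (Finset.mem_univ _))
        exact (Finset.mem_Icc.mp hmm).2
      have hge : s.y m ≤ s.y ⟨0, hppos⟩ :=
        s.y_anti.antitone (Fin.mk_le_mk.mpr (Nat.zero_le _))
      have hy0 : s.y ⟨0, hppos⟩ = (n : ℤ) := le_antisymm h0le (hm ▸ hge)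
      have hye := s.hy ⟨0, hppos⟩
      rw [hy0] at hye
      simp only [Fin.val_mk, Nat.cast_zero] at hye
      have ha := s.a_nonneg ⟨0, hppos⟩
      omega
  exact Nat.card_of_isEmpty
end

section
/- Suppose p and q are odd, and ε+η ≡ n+1 (mod 2). Then there are no reduced solutions for the data (n,k,u,v,p,q,ε,η): the number of reduced solutions is 0. -/
theorem gaussFin (c : ℕ) : 2 * ∑ i : Fin c, (i.1 : ℤ) = c * (c - 1) := by
  induction c with
  | zero => simp
  | succ m ih =>
    rw [Fin.sum_univ_castSucc]
    simp only [Fin.coe_castSucc]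
    push_cast
    push_cast at ih
    ring_nf
    ring_nf at ih
    linarith

theorem gaussIcc (a : ℤ) (c : ℕ) :
    2 * ∑ t ∈ Finset.Icc (a+1) (a+c), t = c * (2*a + c + 1) := by
  induction c with
  | zero => simp
  | succ m ih =>
    have h : Finset.Icc (a+1) (a+(m+1:ℕ)) = insert (a+m+1) (Finset.Icc (a+1) (a+m)) := by
      ext t; simp; omega
    rw [h, Finset.sum_insert (by simp)]
    push_cast; push_cast at ih; ring_nf; ring_nf at ih; linarith

theorem oddMulMod (a b : ℤ) (h : a % 2 = 1) : (a * b) % 2 = b % 2 := by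
  rw [Int.mul_emod, h]; omega

theorem oddSqMod8 (a : ℤ) (h : a % 2 = 1) : (a * a) % 8 = 1 := by
  obtain ⟨m, hm⟩ : ∃ m, a = 2*m+1 := ⟨a/2, by omega⟩
  obtain ⟨f, hf⟩ := Int.even_mul_succ_self m
  have h2 : a * a = 4*(m*(m+1)) + 1 := by rw [hm]; ring
  rw [h2, hf]; omega

/-- Case 2 II of the main theorem for Sp(2n,ℝ): `p, q` odd, `ε+η ≡ n+1 (mod 2)`;
there are no reduced solutions (the Dirac cohomology vanishes). -/
theorem stmt12 (n k u v p q ε η : ℕ) (hk : 1 ≤ k) (hn : 2 * k + u + v = n)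
    (hpq : p + q = 2 * k) (hε : ε ≤ 1) (hη : η ≤ 1)
    (hpo : p % 2 = 1) (hqo : q % 2 = 1)
    (hmod : (ε + η) % 2 = (n + 1) % 2) :
    Nat.card (RedSol n u v p q ε η) = 0 := by
  rw [Nat.card_eq_zero]
  left
  refine ⟨fun s => ?_⟩
  have hxinj : Function.Injective s.x := s.x_anti.injective
  have hyinj : Function.Injective s.y := s.y_anti.injective
  -- the total sum
  have hT : ∑ t ∈ Finset.Icc ((u:ℤ)+v+1) (n:ℤ), t = (∑ i, s.x i) + (∑ m, s.y m) := by
    rw [← s.uni, Finset.sum_union s.disj,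
      Finset.sum_image (fun a _ b _ h => hxinj h),
      Finset.sum_image (fun a _ b _ h => hyinj h)]
  -- evaluate the x-sum
  have hSx : ∑ i, s.x i =
      (q:ℤ) * ((u:ℤ)+q+η) - (∑ i : Fin q, (i.1:ℤ)) + 2 * ∑ i, s.b i := by
    have h1 : ∀ i : Fin q, s.x i = (((u:ℤ)+q+η) - (i.1:ℤ)) + 2 * s.b i := by
      intro i; rw [s.hx i]; ring
    rw [Finset.sum_congr rfl fun i _ => h1 i, Finset.sum_add_distrib,
      Finset.sum_sub_distrib, Finset.sum_const, ← Finset.mul_sum]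
    simp [Finset.card_univ, mul_comm]
  have hSy : ∑ m, s.y m =
      (p:ℤ) * ((v:ℤ)+p-1+ε) - (∑ m : Fin p, (m.1:ℤ)) + 2 * ∑ m, s.a m := by
    have h1 : ∀ m : Fin p, s.y m = (((v:ℤ)+p-1+ε) - (m.1:ℤ)) + 2 * s.a m := by
      intro m; rw [s.hy m]; ring
    rw [Finset.sum_congr rfl fun m _ => h1 m, Finset.sum_add_distrib,
      Finset.sum_sub_distrib, Finset.sum_const, ← Finset.mul_sum]
    simp [Finset.card_univ, mul_comm]
  -- total
  have hTval : ∑ t ∈ Finset.Icc ((u:ℤ)+v+1) (n:ℤ), t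
      = (k:ℤ) * (2*((u:ℤ)+v) + 2*k + 1) := by
    have h2 : ((n:ℤ)) = ((u:ℤ)+v) + (2*k : ℕ) := by push_cast; omega
    have := gaussIcc ((u:ℤ)+v) (2*k)
    rw [h2]
    push_cast at this ⊢
    linarith
  have hT2 : (∑ t ∈ Finset.Icc ((u:ℤ)+v+1) (n:ℤ), t) % 2 = (k:ℤ) % 2 := by
    rw [hTval, mul_comm]
    exact oddMulMod _ _ (by omega)
  have h3 : ((q:ℤ) * ((u:ℤ)+q+η)) % 2 = ((u:ℤ)+q+η) % 2 :=
    oddMulMod _ _ (by omega)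
  have h4 : ((p:ℤ) * ((v:ℤ)+p-1+ε)) % 2 = ((v:ℤ)+p-1+ε) % 2 :=
    oddMulMod _ _ (by omega)
  have hE2 : 2 * (∑ i : Fin q, (i.1:ℤ)) = (q:ℤ)*q - q := by
    have := gaussFin q; linarith [this]
  have hE3 : 2 * (∑ m : Fin p, (m.1:ℤ)) = (p:ℤ)*p - p := by
    have := gaussFin p; linarith [this]
  have hq8 : ((q:ℤ)*q) % 8 = 1 := oddSqMod8 _ (by omega)
  have hp8 : ((p:ℤ)*p) % 8 = 1 := oddSqMod8 _ (by omega)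
  rw [hSx, hSy] at hT
  -- abstract all nonlinear subterms into fresh variables
  obtain ⟨T, Iq, Ip, B, A, t3, t4, qq, pp, hT, hT2, h3, h4, hE2, hq8, hE3, hp8⟩ :
      ∃ T Iq Ip B A t3 t4 qq pp : ℤ,
        T = t3 - Iq + 2*B + (t4 - Ip + 2*A) ∧
        T % 2 = (k:ℤ) % 2 ∧
        t3 % 2 = ((u:ℤ)+q+η) % 2 ∧
        t4 % 2 = ((v:ℤ)+p-1+ε) % 2 ∧
        2 * Iq = qq - q ∧ qq % 8 = 1 ∧
        2 * Ip = pp - p ∧ pp % 8 = 1 :=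
    ⟨_, _, _, _, _, _, _, _, _, hT, hT2, h3, h4, hE2, hq8, hE3, hp8⟩
  omega
end

section
/- Assume p and q are even (hence both ≥ 2). Then the number of tuples (z, b, a), where z is a ρ-vector, b_1 ≥ b_2 ≥ … ≥ b_{q−1} ≥ 0 and a_1 ≥ a_2 ≥ … ≥ a_p ≥ 0 are integers, satisfying z_i − 2b_i = q − i for all 1 ≤ i ≤ q−1 and z_{q−1+j} + 2a_{p+1−j} = −j for all 1 ≤ j ≤ p, equals the binomial coefficient C(k−1, p/2) = C(k−1, (q−2)/2). -/
open Finset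

private lemma fin_strictAnti_adj {n : ℕ} {f : Fin n → ℤ}
    (h : ∀ m : ℕ, ∀ hm : m + 1 < n, f ⟨m + 1, hm⟩ < f ⟨m, by omega⟩) :
    StrictAnti f := by
  cases n with
  | zero => intro a; exact absurd a.2 (by omega)
  | succ n =>
    rw [Fin.strictAnti_iff_succ_lt]
    intro i
    exact h i.1 (by omega)

private lemma fin_antitone_adj {n : ℕ} {f : Fin n → ℤ}
    (h : ∀ m : ℕ, ∀ hm : m + 1 < n, f ⟨m + 1, hm⟩ ≤ f ⟨m, by omega⟩) :
    Antitone f := by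
  cases n with
  | zero => intro a; exact absurd a.2 (by omega)
  | succ n =>
    rw [Fin.antitone_iff_succ_le]
    intro i
    exact h i.1 (by omega)

private lemma fin_le_apply {A B : ℕ} (f : Fin A → Fin B) (hf : StrictMono f) :
    ∀ j, ∀ hj : j < A, j ≤ (f ⟨j, hj⟩).1 := by
  intro j
  induction j with
  | zero => intro _; exact Nat.zero_le _
  | succ j ih =>
    intro hj
    have h1 := ih (by omega)
    have h2 : f ⟨j, by omega⟩ < f ⟨j + 1, hj⟩ := hf (by simp [Fin.lt_def])
    rw [Fin.lt_def] at h2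
    omega

private lemma strictAnti_eq_of_image_eq {n : ℕ} {f g : Fin n → ℤ}
    (hf : StrictAnti f) (hg : StrictAnti g)
    (h : Finset.univ.image f = Finset.univ.image g) : f = g := by
  set s := Finset.univ.image f with hs
  have hcard : s.card = n := by
    rw [hs, Finset.card_image_of_injective _ hf.injective, card_univ, Fintype.card_fin]
  have hF : (fun i => f (Fin.rev i)) = ⇑(s.orderEmbOfFin hcard) := by
    apply Finset.orderEmbOfFin_unique hcard
    · intro x; exact Finset.mem_image_of_mem _ (Finset.mem_univ _)
    · intro a b hab
      exact hf (Fin.rev_lt_rev.mpr hab)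
  have hG : (fun i => g (Fin.rev i)) = ⇑(s.orderEmbOfFin hcard) := by
    apply Finset.orderEmbOfFin_unique hcard
    · intro x; rw [h]; exact Finset.mem_image_of_mem _ (Finset.mem_univ _)
    · intro a b hab
      exact hg (Fin.rev_lt_rev.mpr hab)
  funext i
  have := congrFun (hF.trans hG.symm) (Fin.rev i)
  simpa [Fin.rev_rev] using this

private lemma card_filter_fin (n a c : ℕ) (hac : a ≤ c) (hc : c ≤ n) :
    (Finset.univ.filter (fun m : Fin n => m.1 < a ∨ c ≤ m.1)).card = a + (n - c) := by
  rw [← Finset.card_image_of_injective (Finset.univ.filter (fun m : Fin n => m.1 < a ∨ c ≤ m.1)) Fin.val_injective]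
  have himg : (Finset.univ.filter (fun m : Fin n => m.1 < a ∨ c ≤ m.1)).image Fin.val
      = Finset.range a ∪ Finset.Ico c n := by
    ext x
    simp only [Finset.mem_image, Finset.mem_filter, Finset.mem_univ, true_and,
      Finset.mem_union, Finset.mem_range, Finset.mem_Ico]
    constructor
    · rintro ⟨m, hm, rfl⟩
      have := m.isLt
      omega
    · intro hx
      exact ⟨⟨x, by omega⟩, show x < a ∨ c ≤ x by omega, rfl⟩
  rw [himg, Finset.card_union_of_disjoint, Finset.card_range, Nat.card_Ico]
  rw [Finset.disjoint_left]
  intro x hx hx2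
  simp only [Finset.mem_range] at hx
  simp only [Finset.mem_Ico] at hx2
  omega

/-- A solution for the Dirac cohomology multiplicity count of `X'(p,q;1,0)` for
`Sp(2n,ℝ)`, `n = 2k−1 = p+q−1`: a ρ-vector `z` (strictly decreasing with absolute
values exactly `{1, …, n}`), weakly decreasing nonnegative integers
`b_1 ≥ … ≥ b_{q−1} ≥ 0`, `a_1 ≥ … ≥ a_p ≥ 0` with `z_i − 2b_i = q − i` for
`1 ≤ i ≤ q−1` and `z_{q−1+j} + 2a_{p+1−j} = −j` for `1 ≤ j ≤ p`
(written here with 0-based indices). -/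
structure RhoSol (n p q : ℕ) (hn : q - 1 + p = n) where
  z : Fin n → ℤ
  b : Fin (q - 1) → ℤ
  a : Fin p → ℤ
  z_anti : StrictAnti z
  z_abs : Finset.univ.image (fun i => |z i|) = Finset.Icc (1 : ℤ) (n : ℤ)
  b_anti : Antitone b
  a_anti : Antitone a
  b_nonneg : ∀ i, 0 ≤ b i
  a_nonneg : ∀ m, 0 ≤ a m
  hzb : ∀ i : Fin (q - 1),
    z ⟨i.1, by have := i.isLt; omega⟩ - 2 * b i = (q : ℤ) - 1 - i.1
  hza : ∀ j : Fin p,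
    z ⟨q - 1 + j.1, by have := j.isLt; omega⟩ +
      2 * a ⟨p - 1 - j.1, by have := j.isLt; omega⟩ = -(j.1 : ℤ) - 1


private def zval (K q : ℕ) (T : Finset (Fin K)) (m : ℕ) : ℤ :=
  if m = 0 then (2 * K + 1 : ℤ)
  else if m < q - 1 then
    (if hs : (m - 1) / 2 < T.card then
      (2 * ((T.orderEmbOfFin rfl) ⟨T.card - 1 - (m - 1) / 2, by omega⟩).1
        + (if m % 2 = 1 then 2 else 1) : ℤ)
    else 0)
  else
    (if hu : (m - (q - 1)) / 2 < Tᶜ.card then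
      (-(2 * (((Tᶜ.orderEmbOfFin rfl) ⟨(m - (q - 1)) / 2, hu⟩).1 : ℤ) + 1 + (((m - (q - 1)) % 2 : ℕ) : ℤ)))
    else 0)

private def bval (K : ℕ) (T : Finset (Fin K)) (m : ℕ) : ℤ :=
  if m = 0 then (K : ℤ) - T.card
  else if hs : (m - 1) / 2 < T.card then
    (((T.orderEmbOfFin rfl) ⟨T.card - 1 - (m - 1) / 2, by omega⟩).1 : ℤ)
      + ((m - 1) / 2 : ℕ) + 1 - T.card
  else 0

private def aval (K p : ℕ) (T : Finset (Fin K)) (m : ℕ) : ℤ :=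
  if hu : (p - 1 - m) / 2 < Tᶜ.card then
    (((Tᶜ.orderEmbOfFin rfl) ⟨(p - 1 - m) / 2, hu⟩).1 : ℤ) - ((p - 1 - m) / 2 : ℕ)
  else 0

private lemma zval_zero (K q : ℕ) (T : Finset (Fin K)) : zval K q T 0 = 2 * K + 1 := by
  simp [zval]

private lemma zval_pos {K q : ℕ} {T : Finset (Fin K)} {m : ℕ} (h1 : m ≠ 0) (h2 : m < q - 1)
    (s : Fin T.card) (hsv : s.1 = T.card - 1 - (m - 1) / 2) (hs : (m - 1) / 2 < T.card) :
    zval K q T m = 2 * (((T.orderEmbOfFin rfl) s).1 : ℤ) + (if m % 2 = 1 then 2 else 1) := by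
  rw [zval, if_neg h1, if_pos h2, dif_pos hs]
  have he : (⟨T.card - 1 - (m - 1) / 2, by omega⟩ : Fin T.card) = s := Fin.ext hsv.symm
  rw [he]

private lemma zval_neg {K q : ℕ} {T : Finset (Fin K)} {m : ℕ} (h1 : m ≠ 0) (h2 : ¬ (m < q - 1))
    (u : Fin Tᶜ.card) (huv : u.1 = (m - (q - 1)) / 2) (hu : (m - (q - 1)) / 2 < Tᶜ.card) :
    zval K q T m = -(2 * (((Tᶜ.orderEmbOfFin rfl) u).1 : ℤ) + 1 + ((m - (q - 1)) % 2 : ℕ)) := by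
  rw [zval, if_neg h1, if_neg h2, dif_pos hu]
  have he : (⟨(m - (q - 1)) / 2, hu⟩ : Fin Tᶜ.card) = u := Fin.ext huv.symm
  rw [he]

private lemma bval_zero (K : ℕ) (T : Finset (Fin K)) : bval K T 0 = (K : ℤ) - T.card := by
  simp [bval]

private lemma bval_pos {K : ℕ} {T : Finset (Fin K)} {m : ℕ} (h1 : m ≠ 0)
    (s : Fin T.card) (hsv : s.1 = T.card - 1 - (m - 1) / 2) (hs : (m - 1) / 2 < T.card) :
    bval K T m = (((T.orderEmbOfFin rfl) s).1 : ℤ) + ((m - 1) / 2 : ℕ) + 1 - T.card := by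
  rw [bval, if_neg h1, dif_pos hs]
  have he : (⟨T.card - 1 - (m - 1) / 2, by omega⟩ : Fin T.card) = s := Fin.ext hsv.symm
  rw [he]

private lemma aval_eval {K p : ℕ} {T : Finset (Fin K)} {m : ℕ}
    (u : Fin Tᶜ.card) (huv : u.1 = (p - 1 - m) / 2) (hu : (p - 1 - m) / 2 < Tᶜ.card) :
    aval K p T m = (((Tᶜ.orderEmbOfFin rfl) u).1 : ℤ) - ((p - 1 - m) / 2 : ℕ) := by
  rw [aval, dif_pos hu]
  have he : (⟨(p - 1 - m) / 2, hu⟩ : Fin Tᶜ.card) = u := Fin.ext huv.symm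
  rw [he]

private lemma zval_image_char {K n p q : ℕ} {T : Finset (Fin K)} (hq : q = 2 * T.card + 2)
    (hpq : p + q = 2 * K + 2) (hn : n = 2 * K + 1) (v : ℤ) :
    (∃ m : Fin n, zval K q T m.1 = v) ↔
      (v = 2 * (K : ℤ) + 1 ∨
        (∃ t : Fin K, t ∈ T ∧ (v = 2 * (t.1 : ℤ) + 1 ∨ v = 2 * (t.1 : ℤ) + 2)) ∨
        (∃ t : Fin K, t ∉ T ∧ (v = -(2 * (t.1 : ℤ) + 1) ∨ v = -(2 * (t.1 : ℤ) + 2)))) := by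
  have hRK : T.card ≤ K := by simpa using T.card_le_univ
  have hcc : Tᶜ.card = K - T.card := by rw [Finset.card_compl, Fintype.card_fin]
  constructor
  · rintro ⟨m, rfl⟩
    rcases Nat.eq_zero_or_pos m.1 with h0 | h0
    · left; rw [h0, zval_zero]
    · by_cases hblk : m.1 < q - 1
      · have hs : (m.1 - 1) / 2 < T.card := by omega
        rw [zval_pos (by omega) hblk ⟨T.card - 1 - (m.1 - 1) / 2, by omega⟩ rfl hs]
        right; left
        refine ⟨(T.orderEmbOfFin rfl) ⟨T.card - 1 - (m.1 - 1) / 2, by omega⟩,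
          Finset.orderEmbOfFin_mem T rfl _, ?_⟩
        by_cases hm2 : m.1 % 2 = 1
        · rw [if_pos hm2]; right; rfl
        · rw [if_neg hm2]; left; rfl
      · have hj : m.1 - (q - 1) < p := by have := m.isLt; omega
        have hu : (m.1 - (q - 1)) / 2 < Tᶜ.card := by omega
        rw [zval_neg (by omega) hblk ⟨(m.1 - (q - 1)) / 2, hu⟩ rfl hu]
        right; right
        refine ⟨(Tᶜ.orderEmbOfFin rfl) ⟨(m.1 - (q - 1)) / 2, hu⟩, ?_, ?_⟩
        · exact Finset.mem_compl.mp (Finset.orderEmbOfFin_mem Tᶜ rfl _)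
        · rcases Nat.mod_two_eq_zero_or_one (m.1 - (q - 1)) with h2 | h2
          · left; rw [h2]; push_cast; ring
          · right; rw [h2]; push_cast; ring
  · intro hv
    rcases hv with rfl | ⟨t, ht, hv⟩ | ⟨t, ht, hv⟩
    · exact ⟨⟨0, by omega⟩, zval_zero K q T⟩
    · have htr : t ∈ Set.range ⇑(T.orderEmbOfFin rfl) := by
        rw [Finset.range_orderEmbOfFin]; exact ht
      obtain ⟨s', hs'⟩ := htr
      have hR1 := s'.isLt
      rcases hv with rfl | rfl
      · refine ⟨⟨2 * (T.card - 1 - s'.1) + 2, by omega⟩, ?_⟩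
        show zval K q T (2 * (T.card - 1 - s'.1) + 2) = _
        rw [zval_pos (by omega) (by omega) s' (by omega) (by omega)]
        rw [if_neg (by omega), hs']
      · refine ⟨⟨2 * (T.card - 1 - s'.1) + 1, by omega⟩, ?_⟩
        show zval K q T (2 * (T.card - 1 - s'.1) + 1) = _
        rw [zval_pos (by omega) (by omega) s' (by omega) (by omega)]
        rw [if_pos (by omega), hs']
    · have ht' : t ∈ Tᶜ := Finset.mem_compl.mpr ht
      have htr : t ∈ Set.range ⇑(Tᶜ.orderEmbOfFin rfl) := by
        rw [Finset.range_orderEmbOfFin]; exact ht'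
      obtain ⟨u', hu'⟩ := htr
      have hcc1 : u'.1 < K - T.card := by have := u'.isLt; omega
      rcases hv with rfl | rfl
      · refine ⟨⟨q - 1 + 2 * u'.1, by omega⟩, ?_⟩
        show zval K q T (q - 1 + 2 * u'.1) = _
        rw [zval_neg (by omega) (by omega) u' (by omega) (by omega), hu']
        rw [show (q - 1 + 2 * u'.1 - (q - 1)) % 2 = 0 by omega]
        push_cast; ring
      · refine ⟨⟨q - 1 + 2 * u'.1 + 1, by omega⟩, ?_⟩
        show zval K q T (q - 1 + 2 * u'.1 + 1) = _
        rw [zval_neg (by omega) (by omega) u' (by omega) (by omega), hu']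
        rw [show (q - 1 + 2 * u'.1 + 1 - (q - 1)) % 2 = 1 by omega]
        push_cast; ring

private def mkSol (K n p q : ℕ) (T : Finset (Fin K)) (hq : q = 2 * T.card + 2)
    (hpq : p + q = 2 * K + 2) (hn : q - 1 + p = n) : RhoSol n p q hn where
  z := fun m => zval K q T m.1
  b := fun i => bval K T i.1
  a := fun m => aval K p T m.1
  z_anti := by
    have hRK : T.card ≤ K := by simpa using T.card_le_univ
    have hcc : Tᶜ.card = K - T.card := by rw [Finset.card_compl, Fintype.card_fin]
    have emono : ∀ a b : Fin T.card, a.1 < b.1 →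
        (((T.orderEmbOfFin rfl) a).1 : ℕ) < ((T.orderEmbOfFin rfl) b).1 := by
      intro a b h
      have := (T.orderEmbOfFin rfl).strictMono (show a < b from h)
      rwa [Fin.lt_def] at this
    have fmono : ∀ a b : Fin Tᶜ.card, a.1 < b.1 →
        (((Tᶜ.orderEmbOfFin rfl) a).1 : ℕ) < ((Tᶜ.orderEmbOfFin rfl) b).1 := by
      intro a b h
      have := (Tᶜ.orderEmbOfFin rfl).strictMono (show a < b from h)
      rwa [Fin.lt_def] at this
    apply fin_strictAnti_adj
    intro m hm
    show zval K q T (m + 1) < zval K q T m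
    rcases Nat.eq_zero_or_pos m with rfl | hm0
    · show zval K q T 1 < zval K q T 0
      rw [zval_zero]
      by_cases h1 : (1 : ℕ) < q - 1
      · have hs : (1 - 1) / 2 < T.card := by omega
        have hsX : T.card - 1 - (1 - 1) / 2 < T.card := by omega
        rw [zval_pos one_ne_zero h1 ⟨T.card - 1 - (1 - 1) / 2, hsX⟩ rfl hs]
        have hlt := ((T.orderEmbOfFin rfl) ⟨T.card - 1 - (1 - 1) / 2, hsX⟩).isLt
        rw [if_pos (show (1 : ℕ) % 2 = 1 by omega)]
        omega
      · have hu : ((1 : ℕ) - (q - 1)) / 2 < Tᶜ.card := by omega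
        rw [zval_neg one_ne_zero (by omega) ⟨(1 - (q - 1)) / 2, hu⟩ rfl hu]
        omega
    · by_cases hblk : m + 1 < q - 1
      · have hs1 : (m - 1) / 2 < T.card := by omega
        have hs2 : (m + 1 - 1) / 2 < T.card := by omega
        rcases Nat.mod_two_eq_zero_or_one m with hm2 | hm2
        · have hsa : T.card - 1 - (m + 1 - 1) / 2 < T.card := by omega
          have hsb : T.card - 1 - (m - 1) / 2 < T.card := by omega
          rw [zval_pos (by omega) hblk ⟨T.card - 1 - (m + 1 - 1) / 2, hsa⟩ rfl hs2,
              zval_pos (by omega) (by omega) ⟨T.card - 1 - (m - 1) / 2, hsb⟩ rfl hs1]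
          rw [if_pos (show (m + 1) % 2 = 1 by omega), if_neg (show ¬ m % 2 = 1 by omega)]
          have hlt := emono ⟨T.card - 1 - (m + 1 - 1) / 2, hsa⟩ ⟨T.card - 1 - (m - 1) / 2, hsb⟩
            (show T.card - 1 - (m + 1 - 1) / 2 < T.card - 1 - (m - 1) / 2 by omega)
          omega
        · have hsb : T.card - 1 - (m - 1) / 2 < T.card := by omega
          rw [zval_pos (by omega) hblk ⟨T.card - 1 - (m - 1) / 2, hsb⟩
                (show T.card - 1 - (m - 1) / 2 = T.card - 1 - (m + 1 - 1) / 2 by omega) hs2,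
              zval_pos (by omega) (by omega) ⟨T.card - 1 - (m - 1) / 2, hsb⟩ rfl hs1]
          rw [if_neg (show ¬ (m + 1) % 2 = 1 by omega), if_pos (show m % 2 = 1 by omega)]
          omega
      · by_cases hblk2 : m < q - 1
        · -- m+1 = q-1 boundary
          have hs1 : (m - 1) / 2 < T.card := by omega
          have hsb : T.card - 1 - (m - 1) / 2 < T.card := by omega
          have hu : ((m + 1) - (q - 1)) / 2 < Tᶜ.card := by omega
          rw [zval_neg (by omega) (by omega) ⟨((m + 1) - (q - 1)) / 2, hu⟩ rfl hu,
              zval_pos (by omega) hblk2 ⟨T.card - 1 - (m - 1) / 2, hsb⟩ rfl hs1]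
          split_ifs <;> omega
        · have hu1 : (m - (q - 1)) / 2 < Tᶜ.card := by omega
          have hu2 : ((m + 1) - (q - 1)) / 2 < Tᶜ.card := by omega
          rcases Nat.mod_two_eq_zero_or_one (m - (q - 1)) with hj2 | hj2
          · rw [zval_neg (by omega) (by omega) ⟨(m - (q - 1)) / 2, hu1⟩
                  (show (m - (q - 1)) / 2 = ((m + 1) - (q - 1)) / 2 by omega) hu2,
                zval_neg (by omega) (by omega) ⟨(m - (q - 1)) / 2, hu1⟩ rfl hu1]
            omega
          · have hlt := fmono ⟨(m - (q - 1)) / 2, hu1⟩ ⟨((m + 1) - (q - 1)) / 2, hu2⟩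
              (show (m - (q - 1)) / 2 < ((m + 1) - (q - 1)) / 2 by omega)
            rw [zval_neg (by omega) (by omega) ⟨((m + 1) - (q - 1)) / 2, hu2⟩ rfl hu2,
                zval_neg (by omega) (by omega) ⟨(m - (q - 1)) / 2, hu1⟩ rfl hu1]
            omega
  z_abs := by
    have hRK : T.card ≤ K := by simpa using T.card_le_univ
    have hcc : Tᶜ.card = K - T.card := by rw [Finset.card_compl, Fintype.card_fin]
    have hn2 : n = 2 * K + 1 := by omega
    ext v
    simp only [Finset.mem_image, Finset.mem_univ, true_and, Finset.mem_Icc]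
    constructor
    · rintro ⟨m, rfl⟩
      have hchar := (zval_image_char hq hpq hn2 (zval K q T m.1)).mp ⟨m, rfl⟩
      rcases hchar with h | ⟨t, _, h | h⟩ | ⟨t, _, h | h⟩
      · rw [h, abs_of_nonneg (by omega : (0:ℤ) ≤ 2 * (K:ℤ) + 1)]; omega
      · have := t.isLt; rw [h, abs_of_nonneg (by omega : (0:ℤ) ≤ 2 * (t.1:ℤ) + 1)]; omega
      · have := t.isLt; rw [h, abs_of_nonneg (by omega : (0:ℤ) ≤ 2 * (t.1:ℤ) + 2)]; omega
      · have := t.isLt; rw [h, abs_of_nonpos (by omega : -(2 * (t.1:ℤ) + 1) ≤ 0)]; omega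
      · have := t.isLt; rw [h, abs_of_nonpos (by omega : -(2 * (t.1:ℤ) + 2) ≤ 0)]; omega
    · rintro ⟨hv1, hv2⟩
      by_cases hvn : v = 2 * (K:ℤ) + 1
      · obtain ⟨m, hm⟩ := (zval_image_char hq hpq hn2 v).mpr (Or.inl hvn)
        exact ⟨m, by rw [hm, abs_of_nonneg (by omega : (0:ℤ) ≤ v)]⟩
      · have htK : (v.toNat - 1) / 2 < K := by omega
        have hvt : v = 2 * (((v.toNat - 1) / 2 : ℕ) : ℤ) + 1
            ∨ v = 2 * (((v.toNat - 1) / 2 : ℕ) : ℤ) + 2 := by omega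
        by_cases hT : (⟨(v.toNat - 1) / 2, htK⟩ : Fin K) ∈ T
        · rcases hvt with hv' | hv'
          · obtain ⟨m, hm⟩ := (zval_image_char hq hpq hn2 v).mpr
              (Or.inr (Or.inl ⟨⟨(v.toNat - 1) / 2, htK⟩, hT, Or.inl hv'⟩))
            exact ⟨m, by rw [hm, abs_of_nonneg (by omega : (0:ℤ) ≤ v)]⟩
          · obtain ⟨m, hm⟩ := (zval_image_char hq hpq hn2 v).mpr
              (Or.inr (Or.inl ⟨⟨(v.toNat - 1) / 2, htK⟩, hT, Or.inr hv'⟩))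
            exact ⟨m, by rw [hm, abs_of_nonneg (by omega : (0:ℤ) ≤ v)]⟩
        · rcases hvt with hv' | hv'
          · obtain ⟨m, hm⟩ := (zval_image_char hq hpq hn2 (-v)).mpr
              (Or.inr (Or.inr ⟨⟨(v.toNat - 1) / 2, htK⟩, hT,
                Or.inl (show -v = -(2 * (((v.toNat - 1) / 2 : ℕ) : ℤ) + 1) by omega)⟩))
            exact ⟨m, by rw [hm, abs_of_nonpos (by omega : -v ≤ 0)]; omega⟩
          · obtain ⟨m, hm⟩ := (zval_image_char hq hpq hn2 (-v)).mpr
              (Or.inr (Or.inr ⟨⟨(v.toNat - 1) / 2, htK⟩, hT,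
                Or.inr (show -v = -(2 * (((v.toNat - 1) / 2 : ℕ) : ℤ) + 2) by omega)⟩))
            exact ⟨m, by rw [hm, abs_of_nonpos (by omega : -v ≤ 0)]; omega⟩
  b_anti := by
    have hRK : T.card ≤ K := by simpa using T.card_le_univ
    have emono : ∀ a b : Fin T.card, a.1 < b.1 →
        (((T.orderEmbOfFin rfl) a).1 : ℕ) < ((T.orderEmbOfFin rfl) b).1 := by
      intro a b h
      have := (T.orderEmbOfFin rfl).strictMono (show a < b from h)
      rwa [Fin.lt_def] at this
    apply fin_antitone_adj
    intro m hm
    show bval K T (m + 1) ≤ bval K T m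
    rcases Nat.eq_zero_or_pos m with rfl | hm0
    · show bval K T 1 ≤ bval K T 0
      rw [bval_zero]
      have hs : (1 - 1) / 2 < T.card := by omega
      have hsX : T.card - 1 - (1 - 1) / 2 < T.card := by omega
      rw [bval_pos one_ne_zero ⟨T.card - 1 - (1 - 1) / 2, hsX⟩ rfl hs]
      have hlt := ((T.orderEmbOfFin rfl) ⟨T.card - 1 - (1 - 1) / 2, hsX⟩).isLt
      omega
    · have hs1 : (m - 1) / 2 < T.card := by omega
      have hs2 : (m + 1 - 1) / 2 < T.card := by omega
      rcases Nat.mod_two_eq_zero_or_one m with hm2 | hm2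
      · have hsa : T.card - 1 - (m + 1 - 1) / 2 < T.card := by omega
        have hsb : T.card - 1 - (m - 1) / 2 < T.card := by omega
        rw [bval_pos (by omega) ⟨T.card - 1 - (m + 1 - 1) / 2, hsa⟩ rfl hs2,
            bval_pos (by omega) ⟨T.card - 1 - (m - 1) / 2, hsb⟩ rfl hs1]
        have hlt := emono ⟨T.card - 1 - (m + 1 - 1) / 2, hsa⟩ ⟨T.card - 1 - (m - 1) / 2, hsb⟩
          (show T.card - 1 - (m + 1 - 1) / 2 < T.card - 1 - (m - 1) / 2 by omega)
        omega
      · have hsb : T.card - 1 - (m - 1) / 2 < T.card := by omega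
        rw [bval_pos (by omega) ⟨T.card - 1 - (m - 1) / 2, hsb⟩
              (show T.card - 1 - (m - 1) / 2 = T.card - 1 - (m + 1 - 1) / 2 by omega) hs2,
            bval_pos (by omega) ⟨T.card - 1 - (m - 1) / 2, hsb⟩ rfl hs1]
        omega
  a_anti := by
    have hRK : T.card ≤ K := by simpa using T.card_le_univ
    have hcc : Tᶜ.card = K - T.card := by rw [Finset.card_compl, Fintype.card_fin]
    have fmono : ∀ a b : Fin Tᶜ.card, a.1 < b.1 →
        (((Tᶜ.orderEmbOfFin rfl) a).1 : ℕ) < ((Tᶜ.orderEmbOfFin rfl) b).1 := by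
      intro a b h
      have := (Tᶜ.orderEmbOfFin rfl).strictMono (show a < b from h)
      rwa [Fin.lt_def] at this
    apply fin_antitone_adj
    intro m hm
    show aval K p T (m + 1) ≤ aval K p T m
    have hu1 : (p - 1 - m) / 2 < Tᶜ.card := by omega
    have hu2 : (p - 1 - (m + 1)) / 2 < Tᶜ.card := by omega
    rcases Nat.mod_two_eq_zero_or_one (p - 1 - m) with hj2 | hj2
    · have hlt := fmono ⟨(p - 1 - (m + 1)) / 2, hu2⟩ ⟨(p - 1 - m) / 2, hu1⟩
        (show (p - 1 - (m + 1)) / 2 < (p - 1 - m) / 2 by omega)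
      rw [aval_eval ⟨(p - 1 - (m + 1)) / 2, hu2⟩ rfl hu2,
          aval_eval ⟨(p - 1 - m) / 2, hu1⟩ rfl hu1]
      omega
    · rw [aval_eval ⟨(p - 1 - m) / 2, hu1⟩
            (show (p - 1 - m) / 2 = (p - 1 - (m + 1)) / 2 by omega) hu2,
          aval_eval ⟨(p - 1 - m) / 2, hu1⟩ rfl hu1]
      omega
  b_nonneg := by
    have hRK : T.card ≤ K := by simpa using T.card_le_univ
    intro i
    show 0 ≤ bval K T i.1
    rcases Nat.eq_zero_or_pos i.1 with h0 | h0
    · rw [h0, bval_zero]; omega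
    · have hs : (i.1 - 1) / 2 < T.card := by have := i.isLt; omega
      have hsX : T.card - 1 - (i.1 - 1) / 2 < T.card := by omega
      rw [bval_pos (by omega) ⟨T.card - 1 - (i.1 - 1) / 2, hsX⟩ rfl hs]
      have hge := fin_le_apply _ (T.orderEmbOfFin rfl).strictMono
        (T.card - 1 - (i.1 - 1) / 2) hsX
      have := i.isLt
      omega
  a_nonneg := by
    have hRK : T.card ≤ K := by simpa using T.card_le_univ
    have hcc : Tᶜ.card = K - T.card := by rw [Finset.card_compl, Fintype.card_fin]
    intro m'
    show 0 ≤ aval K p T m'.1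
    have hu : (p - 1 - m'.1) / 2 < Tᶜ.card := by have := m'.isLt; omega
    rw [aval_eval ⟨(p - 1 - m'.1) / 2, hu⟩ rfl hu]
    have hge := fin_le_apply _ (Tᶜ.orderEmbOfFin rfl).strictMono ((p - 1 - m'.1) / 2) hu
    omega
  hzb := by
    have hRK : T.card ≤ K := by simpa using T.card_le_univ
    intro i
    show zval K q T i.1 - 2 * bval K T i.1 = (q : ℤ) - 1 - i.1
    rcases Nat.eq_zero_or_pos i.1 with h0 | h0
    · rw [h0, zval_zero, bval_zero]
      push_cast
      omega
    · have hs : (i.1 - 1) / 2 < T.card := by have := i.isLt; omega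
      have hsX : T.card - 1 - (i.1 - 1) / 2 < T.card := by omega
      rw [zval_pos (by omega) i.isLt ⟨T.card - 1 - (i.1 - 1) / 2, hsX⟩ rfl hs,
          bval_pos (by omega) ⟨T.card - 1 - (i.1 - 1) / 2, hsX⟩ rfl hs]
      split_ifs with h2 <;> push_cast <;> omega
  hza := by
    have hRK : T.card ≤ K := by simpa using T.card_le_univ
    have hcc : Tᶜ.card = K - T.card := by rw [Finset.card_compl, Fintype.card_fin]
    intro j
    have hj := j.isLt
    show zval K q T (q - 1 + j.1) + 2 * aval K p T (p - 1 - j.1) = -(j.1 : ℤ) - 1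
    have hu : ((q - 1 + j.1) - (q - 1)) / 2 < Tᶜ.card := by omega
    have hu' : (p - 1 - (p - 1 - j.1)) / 2 < Tᶜ.card := by omega
    rw [zval_neg (by omega) (by omega) ⟨((q - 1 + j.1) - (q - 1)) / 2, hu⟩ rfl hu,
        aval_eval ⟨((q - 1 + j.1) - (q - 1)) / 2, hu⟩
          (show ((q - 1 + j.1) - (q - 1)) / 2 = (p - 1 - (p - 1 - j.1)) / 2 by omega) hu']
    push_cast
    omega

private lemma mem_T_iff {K n p q : ℕ} {T : Finset (Fin K)} (hq : q = 2 * T.card + 2)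
    (hpq : p + q = 2 * K + 2) (hn2 : n = 2 * K + 1) (t : Fin K) :
    t ∈ T ↔ ∃ m : Fin n, zval K q T m.1 = 2 * (t.1 : ℤ) + 2 := by
  constructor
  · intro ht
    exact (zval_image_char hq hpq hn2 _).mpr (Or.inr (Or.inl ⟨t, ht, Or.inr rfl⟩))
  · intro h
    rcases (zval_image_char hq hpq hn2 _).mp h with h1 | ⟨t', ht', h1 | h1⟩ | ⟨t', ht', h1 | h1⟩
    · exact absurd h1 (by have := t.isLt; omega)
    · exact absurd h1 (by omega)
    · have he : t' = t := Fin.ext (by omega)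
      exact he ▸ ht'
    · exact absurd h1 (by omega)
    · exact absurd h1 (by omega)

private lemma rhoSol_ext {n p q : ℕ} {hn : q - 1 + p = n} (s t : RhoSol n p q hn)
    (h : s.z = t.z) : s = t := by
  obtain ⟨z1, b1, a1, p1, p2, p3, p4, p5, p6, p7, p8⟩ := s
  obtain ⟨z2, b2, a2, q1, q2, q3, q4, q5, q6, q7, q8⟩ := t
  change z1 = z2 at h
  subst h
  have hb : b1 = b2 := by
    funext i
    have h1 := p7 i
    have h2 := q7 i
    omega
  have ha : a1 = a2 := by
    funext m
    have hpf1 : p - 1 - m.1 < p := by have := m.isLt; omega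
    have h1 := p8 ⟨p - 1 - m.1, hpf1⟩
    have h2 := q8 ⟨p - 1 - m.1, hpf1⟩
    have hpf2 : p - 1 - (p - 1 - m.1) < p := by have := m.isLt; omega
    have h1' : z1 ⟨q - 1 + (p - 1 - m.1), by omega⟩ + 2 * a1 ⟨p - 1 - (p - 1 - m.1), hpf2⟩
        = -((p - 1 - m.1 : ℕ) : ℤ) - 1 := h1
    have h2' : z1 ⟨q - 1 + (p - 1 - m.1), by omega⟩ + 2 * a2 ⟨p - 1 - (p - 1 - m.1), hpf2⟩
        = -((p - 1 - m.1 : ℕ) : ℤ) - 1 := h2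
    have e0 : (⟨p - 1 - (p - 1 - m.1), hpf2⟩ : Fin p) = m :=
      Fin.ext (show p - 1 - (p - 1 - m.1) = m.1 by have := m.isLt; omega)
    have e1 : a1 ⟨p - 1 - (p - 1 - m.1), hpf2⟩ = a1 m := congrArg a1 e0
    have e2 : a2 ⟨p - 1 - (p - 1 - m.1), hpf2⟩ = a2 m := congrArg a2 e0
    omega
  subst hb
  subst ha
  rfl

private lemma rhoSol_surj {K n p q : ℕ} (hq2 : q % 2 = 0) (hp2 : p % 2 = 0)
    (hqge : 2 ≤ q) (hpge : 2 ≤ p) (hpq : p + q = 2 * K + 2) (hn2 : n = 2 * K + 1)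
    (hn : q - 1 + p = n) (sol : RhoSol n p q hn) :
    ∃ (T : Finset (Fin K)) (hqT : q = 2 * T.card + 2), mkSol K n p q T hqT hpq hn = sol := by
  classical
  set z := sol.z with hzdef
  have hzpos : ∀ m : Fin n, m.1 < q - 1 → ∃ bb : ℤ, 0 ≤ bb ∧ z m = (q : ℤ) - 1 - m.1 + 2 * bb := by
    intro m hm
    refine ⟨sol.b ⟨m.1, hm⟩, sol.b_nonneg _, ?_⟩
    have h' : z m - 2 * sol.b ⟨m.1, hm⟩ = (q : ℤ) - 1 - m.1 := sol.hzb ⟨m.1, hm⟩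
    omega
  have hzneg : ∀ m : Fin n, q - 1 ≤ m.1 →
      ∃ aa : ℤ, 0 ≤ aa ∧ z m = -((m.1 - (q - 1) : ℕ) : ℤ) - 1 - 2 * aa := by
    intro m hm
    have hj : m.1 - (q - 1) < p := by have := m.isLt; omega
    have h := sol.hza ⟨m.1 - (q - 1), hj⟩
    have e1 : (⟨q - 1 + (m.1 - (q - 1)), by have := m.isLt; omega⟩ : Fin n) = m :=
      Fin.ext (show q - 1 + (m.1 - (q - 1)) = m.1 by omega)
    rw [e1] at h
    have hpf : p - 1 - (m.1 - (q - 1)) < p := by omega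
    have h' : z m + 2 * sol.a ⟨p - 1 - (m.1 - (q - 1)), hpf⟩ = -((m.1 - (q - 1) : ℕ) : ℤ) - 1 := h
    exact ⟨sol.a ⟨p - 1 - (m.1 - (q - 1)), hpf⟩, sol.a_nonneg _, by omega⟩
  have habs : ∀ m : Fin n, 1 ≤ |z m| ∧ |z m| ≤ n := by
    intro m
    have hmem : |z m| ∈ Finset.Icc (1 : ℤ) n := by
      rw [← sol.z_abs]; exact Finset.mem_image_of_mem _ (Finset.mem_univ m)
    simpa [Finset.mem_Icc] using hmem
  have hzinj : Function.Injective z := sol.z_anti.injective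
  have hcardIcc : (Finset.Icc (1 : ℤ) n).card = n := by
    rw [Int.card_Icc]; omega
  have habsinj : ∀ m m' : Fin n, |z m| = |z m'| → m = m' := by
    intro m m' hmm'
    have hinj2 : Set.InjOn (fun x : ℤ => |x|) ↑(Finset.univ.image z) := by
      rw [← Finset.card_image_iff, Finset.image_image]
      have h1 : Finset.univ.image ((fun x : ℤ => |x|) ∘ z) = Finset.Icc (1 : ℤ) n := by
        rw [← sol.z_abs]; rfl
      rw [h1, hcardIcc, Finset.card_image_of_injective _ hzinj, Finset.card_univ,
        Fintype.card_fin]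
    exact hzinj (hinj2 (Finset.mem_coe.mpr (Finset.mem_image_of_mem z (Finset.mem_univ m)))
      (Finset.mem_coe.mpr (Finset.mem_image_of_mem z (Finset.mem_univ m'))) hmm')
  have hxor1 : ∀ v : ℤ, 1 ≤ v → v ≤ n → (∃ m, z m = v) ∨ (∃ m, z m = -v) := by
    intro v h1 h2
    have hv : v ∈ Finset.univ.image (fun i => |z i|) := by
      rw [sol.z_abs]; simp only [Finset.mem_Icc]; omega
    obtain ⟨m, _, hm⟩ := Finset.mem_image.mp hv
    rcases (abs_eq (by omega : (0 : ℤ) ≤ v)).mp hm with h | h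
    · exact Or.inl ⟨m, h⟩
    · exact Or.inr ⟨m, h⟩
  have hnotboth : ∀ v : ℤ, 1 ≤ v → (∃ m, z m = v) → (∃ m, z m = -v) → False := by
    rintro v hv ⟨m1, h1⟩ ⟨m2, h2⟩
    have hm12 : m1 = m2 := habsinj m1 m2 (by rw [h1, h2, abs_neg])
    rw [hm12, h2] at h1
    omega
  have hzn : ∃ m, z m = (n : ℤ) := by
    rcases hxor1 n (by omega) le_rfl with h | ⟨m, hm⟩
    · exact h
    · exfalso
      have hLlt : n - 1 < n := by omega
      have hml : m ≤ (⟨n - 1, hLlt⟩ : Fin n) := by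
        rw [Fin.le_def]; exact (show m.1 ≤ n - 1 by have := m.isLt; omega)
      have h5 : z ⟨n - 1, hLlt⟩ ≤ z m := sol.z_anti.antitone hml
      have h6 := (habs ⟨n - 1, hLlt⟩).2
      have h7 := abs_le.mp h6
      obtain ⟨aa, ha0, hae⟩ := hzneg ⟨n - 1, hLlt⟩ (show q - 1 ≤ n - 1 by omega)
      have hae' : z (⟨n - 1, hLlt⟩ : Fin n) = -((n - 1 - (q - 1) : ℕ) : ℤ) - 1 - 2 * aa := hae
      rw [hm] at h5
      omega
  have hAcard : ∀ tn : ℕ, tn < K →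
      (((Finset.univ.filter (fun m : Fin n => 2 * (tn : ℤ) + 2 ≤ |z m|)).card : ℤ)
        = (n : ℤ) - 2 * tn - 1) := by
    intro tn htn
    have habsinj' : Function.Injective (fun m : Fin n => |z m|) := fun m m' h =>
      habsinj m m' h
    have h1 : (Finset.univ.filter (fun m : Fin n => 2 * (tn : ℤ) + 2 ≤ |z m|)).card
        = ((Finset.univ.filter (fun m : Fin n => 2 * (tn : ℤ) + 2 ≤ |z m|)).image
            (fun m => |z m|)).card :=
      (Finset.card_image_of_injective _ habsinj').symm
    have h2 : (Finset.univ.filter (fun m : Fin n => 2 * (tn : ℤ) + 2 ≤ |z m|)).image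
          (fun m => |z m|)
        = (Finset.Icc (1 : ℤ) n).filter (fun v => 2 * (tn : ℤ) + 2 ≤ v) := by
      rw [← sol.z_abs, Finset.filter_image]
    have h3 : (Finset.Icc (1 : ℤ) n).filter (fun v => 2 * (tn : ℤ) + 2 ≤ v)
        = Finset.Icc (2 * (tn : ℤ) + 2) n := by
      ext x
      simp only [Finset.mem_filter, Finset.mem_Icc]
      omega
    rw [h1, h2, h3, Int.card_Icc]
    omega
  have hpair : ∀ tn : ℕ, tn < K →
      ((∃ m, z m = 2 * (tn : ℤ) + 2) ↔ (∃ m, z m = 2 * (tn : ℤ) + 1)) := by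
    intro tn htn
    constructor
    · rintro ⟨i, hi⟩
      by_contra hno
      rcases hxor1 (2 * (tn : ℤ) + 1) (by omega) (by omega) with h | ⟨w, hw⟩
      · exact hno h
      · have hib : i.1 < q - 1 := by
          by_contra hcon
          obtain ⟨aa, ha0, hae⟩ := hzneg i (by omega)
          rw [hi] at hae
          omega
        have hwb : q - 1 ≤ w.1 := by
          by_contra hcon
          obtain ⟨bb, hb0, hbe⟩ := hzpos w (by omega)
          rw [hw] at hbe
          omega
        obtain ⟨bb, hb0, hbe⟩ := hzpos i hib
        obtain ⟨aa, ha0, hae⟩ := hzneg w hwb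
        rw [hi] at hbe
        rw [hw] at hae
        have hA2 : Finset.univ.filter (fun m : Fin n => 2 * (tn : ℤ) + 2 ≤ |z m|)
            = Finset.univ.filter (fun m : Fin n => m.1 < i.1 + 1 ∨ w.1 + 1 ≤ m.1) := by
          ext m
          simp only [Finset.mem_filter, Finset.mem_univ, true_and]
          constructor
          · intro hm
            by_contra hcon
            push_neg at hcon
            obtain ⟨hc1, hc2⟩ := hcon
            have h5 : z m < z i := sol.z_anti (show i < m from by rw [Fin.lt_def]; omega)
            have h6 : z w ≤ z m := sol.z_anti.antitone (show m ≤ w from by rw [Fin.le_def]; omega)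
            rw [hi] at h5
            rw [hw] at h6
            have h7 : |z m| ≤ 2 * (tn : ℤ) + 1 := abs_le.mpr ⟨by omega, by omega⟩
            omega
          · intro hm
            rcases hm with h | h
            · have h5 : z i ≤ z m := sol.z_anti.antitone (show m ≤ i from by rw [Fin.le_def]; omega)
              rw [hi] at h5
              have h8 := le_abs_self (z m)
              omega
            · have h5 : z m < z w := sol.z_anti (show w < m from by rw [Fin.lt_def]; omega)
              rw [hw] at h5
              have h8 := neg_abs_le (z m)
              omega
        have hAc := hAcard tn htn
        rw [hA2, card_filter_fin n (i.1 + 1) (w.1 + 1) (by omega) (by have := w.isLt; omega)]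
          at hAc
        have hwn := w.isLt
        omega
    · rintro ⟨i, hi⟩
      by_contra hno
      rcases hxor1 (2 * (tn : ℤ) + 2) (by omega) (by omega) with h | ⟨w, hw⟩
      · exact hno h
      · have hib : i.1 < q - 1 := by
          by_contra hcon
          obtain ⟨aa, ha0, hae⟩ := hzneg i (by omega)
          rw [hi] at hae
          omega
        have hwb : q - 1 ≤ w.1 := by
          by_contra hcon
          obtain ⟨bb, hb0, hbe⟩ := hzpos w (by omega)
          rw [hw] at hbe
          omega
        obtain ⟨bb, hb0, hbe⟩ := hzpos i hib
        obtain ⟨aa, ha0, hae⟩ := hzneg w hwb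
        rw [hi] at hbe
        rw [hw] at hae
        have hA2 : Finset.univ.filter (fun m : Fin n => 2 * (tn : ℤ) + 2 ≤ |z m|)
            = Finset.univ.filter (fun m : Fin n => m.1 < i.1 ∨ w.1 ≤ m.1) := by
          ext m
          simp only [Finset.mem_filter, Finset.mem_univ, true_and]
          constructor
          · intro hm
            by_contra hcon
            push_neg at hcon
            obtain ⟨hc1, hc2⟩ := hcon
            have h5 : z m ≤ z i := sol.z_anti.antitone (show i ≤ m from by rw [Fin.le_def]; omega)
            have h6 : z w < z m := sol.z_anti (show m < w from by rw [Fin.lt_def]; omega)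
            rw [hi] at h5
            rw [hw] at h6
            have h7 : |z m| ≤ 2 * (tn : ℤ) + 1 := abs_le.mpr ⟨by omega, by omega⟩
            omega
          · intro hm
            rcases hm with h | h
            · have h5 : z i < z m := sol.z_anti (show m < i from by rw [Fin.lt_def]; omega)
              rw [hi] at h5
              have h8 := le_abs_self (z m)
              omega
            · have h5 : z m ≤ z w := sol.z_anti.antitone (show w ≤ m from by rw [Fin.le_def]; omega)
              rw [hw] at h5
              have h8 := neg_abs_le (z m)
              omega
        have hAc := hAcard tn htn
        rw [hA2, card_filter_fin n i.1 w.1 (by omega) (by have := w.isLt; omega)] at hAc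
        have hwn := w.isLt
        omega
  set T0 : Finset (Fin K) := Finset.univ.filter (fun t : Fin K => ∃ m, z m = 2 * (t.1 : ℤ) + 2)
    with hT0
  have hT0mem : ∀ t : Fin K, t ∈ T0 ↔ ∃ m, z m = 2 * (t.1 : ℤ) + 2 := by
    intro t
    rw [hT0]
    simp
  have hzsign : Finset.univ.filter (fun m : Fin n => 0 < z m)
      = Finset.univ.filter (fun m : Fin n => m.1 < q - 1 ∨ n ≤ m.1) := by
    ext m
    simp only [Finset.mem_filter, Finset.mem_univ, true_and]
    constructor
    · intro hm
      left
      by_contra hcon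
      obtain ⟨aa, ha0, hae⟩ := hzneg m (by omega)
      omega
    · intro hm
      rcases hm with h | h
      · obtain ⟨bb, hb0, hbe⟩ := hzpos m h
        omega
      · exact absurd m.isLt (by omega)
  have hposcard : (Finset.univ.filter (fun m : Fin n => 0 < z m)).card = q - 1 := by
    rw [hzsign, card_filter_fin n (q - 1) n (by omega) le_rfl]
    omega
  have hposimg : (Finset.univ.image z).filter (fun v => 0 < v)
      = insert ((n : ℤ)) ((T0.image (fun t => 2 * (t.1 : ℤ) + 1))
          ∪ (T0.image (fun t => 2 * (t.1 : ℤ) + 2))) := by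
    ext v
    simp only [Finset.mem_filter, Finset.mem_image, Finset.mem_univ, true_and,
      Finset.mem_insert, Finset.mem_union]
    constructor
    · rintro ⟨⟨m, rfl⟩, hv⟩
      have hb := habs m
      have habs2 : |z m| = z m := abs_of_pos hv
      by_cases hvn : z m = (n : ℤ)
      · exact Or.inl hvn
      · have htK : ((z m).toNat - 1) / 2 < K := by omega
        have hvt : z m = 2 * ((((z m).toNat - 1) / 2 : ℕ) : ℤ) + 1
            ∨ z m = 2 * ((((z m).toNat - 1) / 2 : ℕ) : ℤ) + 2 := by omega
        rcases hvt with hv' | hv'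
        · exact Or.inr (Or.inl ⟨⟨((z m).toNat - 1) / 2, htK⟩,
            (hT0mem _).mpr ((hpair _ htK).mpr ⟨m, hv'⟩), hv'.symm⟩)
        · exact Or.inr (Or.inr ⟨⟨((z m).toNat - 1) / 2, htK⟩, (hT0mem _).mpr ⟨m, hv'⟩, hv'.symm⟩)
    · intro hv
      rcases hv with rfl | ⟨t, ht, rfl⟩ | ⟨t, ht, rfl⟩
      · exact ⟨hzn, by omega⟩
      · obtain ⟨m, hm⟩ := (hpair t.1 t.isLt).mp ((hT0mem t).mp ht)
        exact ⟨⟨m, hm⟩, by omega⟩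
      · obtain ⟨m, hm⟩ := (hT0mem t).mp ht
        exact ⟨⟨m, hm⟩, by omega⟩
  have hinj1 : Function.Injective (fun t : Fin K => 2 * (t.1 : ℤ) + 1) := by
    intro a b hab
    have hab' : 2 * (a.1 : ℤ) + 1 = 2 * (b.1 : ℤ) + 1 := hab
    exact Fin.ext (by omega)
  have hinj2' : Function.Injective (fun t : Fin K => 2 * (t.1 : ℤ) + 2) := by
    intro a b hab
    have hab' : 2 * (a.1 : ℤ) + 2 = 2 * (b.1 : ℤ) + 2 := hab
    exact Fin.ext (by omega)
  have hninon : ((n : ℤ)) ∉ (T0.image (fun t => 2 * (t.1 : ℤ) + 1))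
      ∪ (T0.image (fun t => 2 * (t.1 : ℤ) + 2)) := by
    intro hmem
    rcases Finset.mem_union.mp hmem with h | h <;>
      · obtain ⟨t, _, ht⟩ := Finset.mem_image.mp h
        have := t.isLt
        omega
  have hdisj : Disjoint (T0.image (fun t => 2 * (t.1 : ℤ) + 1))
      (T0.image (fun t => 2 * (t.1 : ℤ) + 2)) := by
    rw [Finset.disjoint_left]
    intro x hx1 hx2
    obtain ⟨a, _, ha⟩ := Finset.mem_image.mp hx1
    obtain ⟨b, _, hb⟩ := Finset.mem_image.mp hx2
    omega
  have hposimgcard : ((Finset.univ.image z).filter (fun v => 0 < v)).card = 2 * T0.card + 1 := by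
    rw [hposimg, Finset.card_insert_of_notMem hninon, Finset.card_union_of_disjoint hdisj,
      Finset.card_image_of_injective _ hinj1, Finset.card_image_of_injective _ hinj2']
    omega
  have hfiltercard : ((Finset.univ.image z).filter (fun v => 0 < v)).card = q - 1 := by
    rw [Finset.filter_image, Finset.card_image_of_injective _ hzinj, hposcard]
  have hcardT0 : q = 2 * T0.card + 2 := by omega
  have hval_iff : ∀ v : ℤ, (∃ m : Fin n, z m = v) ↔ (∃ m : Fin n, zval K q T0 m.1 = v) := by
    intro v
    rw [zval_image_char hcardT0 hpq hn2]
    constructor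
    · rintro ⟨m, rfl⟩
      have hb := habs m
      by_cases hsgn : 0 < z m
      · have habs2 : |z m| = z m := abs_of_pos hsgn
        by_cases hvn : z m = (n : ℤ)
        · exact Or.inl (by omega)
        · have htK : ((z m).toNat - 1) / 2 < K := by omega
          have hvt : z m = 2 * ((((z m).toNat - 1) / 2 : ℕ) : ℤ) + 1
              ∨ z m = 2 * ((((z m).toNat - 1) / 2 : ℕ) : ℤ) + 2 := by omega
          rcases hvt with hv' | hv'
          · exact Or.inr (Or.inl ⟨⟨((z m).toNat - 1) / 2, htK⟩,
              (hT0mem _).mpr ((hpair _ htK).mpr ⟨m, hv'⟩), Or.inl hv'⟩)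
          · exact Or.inr (Or.inl ⟨⟨((z m).toNat - 1) / 2, htK⟩,
              (hT0mem _).mpr ⟨m, hv'⟩, Or.inr hv'⟩)
      · have habs2 : |z m| = -z m := abs_of_nonpos (by omega)
        by_cases hvn : z m = -(n : ℤ)
        · exact absurd (hnotboth n (by omega) hzn ⟨m, by omega⟩) (by simp)
        · have htK : ((-z m).toNat - 1) / 2 < K := by omega
          have hvt : z m = -(2 * ((((-z m).toNat - 1) / 2 : ℕ) : ℤ) + 1)
              ∨ z m = -(2 * ((((-z m).toNat - 1) / 2 : ℕ) : ℤ) + 2) := by omega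
          rcases hvt with hv' | hv'
          · refine Or.inr (Or.inr ⟨⟨((-z m).toNat - 1) / 2, htK⟩, ?_, Or.inl hv'⟩)
            intro hmem
            exact hnotboth (2 * ((((-z m).toNat - 1) / 2 : ℕ) : ℤ) + 1) (by omega)
              ((hpair _ htK).mp ((hT0mem _).mp hmem)) ⟨m, by omega⟩
          · refine Or.inr (Or.inr ⟨⟨((-z m).toNat - 1) / 2, htK⟩, ?_, Or.inr hv'⟩)
            intro hmem
            exact hnotboth (2 * ((((-z m).toNat - 1) / 2 : ℕ) : ℤ) + 2) (by omega)
              ((hT0mem _).mp hmem) ⟨m, by omega⟩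
    · intro hv
      rcases hv with rfl | ⟨t, ht, rfl | rfl⟩ | ⟨t, ht, rfl | rfl⟩
      · obtain ⟨m, hm⟩ := hzn
        exact ⟨m, by omega⟩
      · exact (hpair t.1 t.isLt).mp ((hT0mem t).mp ht)
      · exact (hT0mem t).mp ht
      · rcases hxor1 (2 * (t.1 : ℤ) + 1) (by omega) (by have := t.isLt; omega) with h | h
        · exact absurd ((hT0mem t).mpr ((hpair t.1 t.isLt).mpr h)) ht
        · exact h
      · rcases hxor1 (2 * (t.1 : ℤ) + 2) (by omega) (by have := t.isLt; omega) with h | h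
        · exact absurd ((hT0mem t).mpr h) ht
        · exact h
  have himg : Finset.univ.image (fun m : Fin n => zval K q T0 m.1) = Finset.univ.image z := by
    ext v
    simp only [Finset.mem_image, Finset.mem_univ, true_and]
    exact ((hval_iff v).symm)
  have hzeq : (fun m : Fin n => zval K q T0 m.1) = z := by
    exact strictAnti_eq_of_image_eq (mkSol K n p q T0 hcardT0 hpq hn).z_anti sol.z_anti himg
  exact ⟨T0, hcardT0, rhoSol_ext _ _ hzeq⟩

/-- Theorem on `X'(p,q;1,0)` with `p, q` even: the number of solutions equals
`C(k−1, p/2) = C(k−1, (q−2)/2)` (here `n = 2k−1`, `p + q = 2k`, `p, q` even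
positive). -/
theorem stmt13 (n k p q : ℕ) (hk : 1 ≤ k) (hn : n = 2 * k - 1)
    (hppos : 0 < p) (hqpos : 0 < q) (hpq : p + q = 2 * k)
    (hpe : p % 2 = 0) (hqe : q % 2 = 0) :
    Nat.card (RhoSol n p q (by omega)) = Nat.choose (k - 1) (p / 2) ∧
      Nat.choose (k - 1) (p / 2) = Nat.choose (k - 1) ((q - 2) / 2) := by
  have hp2 : 2 ≤ p := by omega
  have hq2 : 2 ≤ q := by omega
  have hsymm : Nat.choose (k - 1) (p / 2) = Nat.choose (k - 1) ((q - 2) / 2) := by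
    have h1 : (q - 2) / 2 = (k - 1) - p / 2 := by omega
    rw [h1, Nat.choose_symm (by omega : p / 2 ≤ k - 1)]
  refine ⟨?_, hsymm⟩
  have hn2 : n = 2 * (k - 1) + 1 := by omega
  have hpq2 : p + q = 2 * (k - 1) + 2 := by omega
  have hn3 : q - 1 + p = n := by omega
  have hbij : Function.Bijective
      (fun (Tc : {T : Finset (Fin (k - 1)) // T.card = (q - 2) / 2}) =>
        mkSol (k - 1) n p q Tc.1 (by have := Tc.2; omega) hpq2 hn3) := by
    constructor
    · intro T1 T2 h12
      have hz := congrArg RhoSol.z h12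
      have hz' : (fun m : Fin n => zval (k - 1) q T1.1 m.1)
          = (fun m : Fin n => zval (k - 1) q T2.1 m.1) := hz
      apply Subtype.ext
      ext t
      rw [mem_T_iff (show q = 2 * T1.1.card + 2 by have := T1.2; omega) hpq2 hn2 t,
          mem_T_iff (show q = 2 * T2.1.card + 2 by have := T2.2; omega) hpq2 hn2 t]
      constructor
      · rintro ⟨m, hm⟩
        exact ⟨m, by rw [← congrFun hz' m]; exact hm⟩
      · rintro ⟨m, hm⟩
        exact ⟨m, by rw [congrFun hz' m]; exact hm⟩
    · intro sol
      obtain ⟨T, hqT, hsol⟩ := rhoSol_surj hqe hpe hq2 hp2 hpq2 hn2 _ sol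
      exact ⟨⟨T, by omega⟩, hsol⟩
  have h1 := Nat.card_eq_of_bijective _ hbij
  have h2 : Nat.card {T : Finset (Fin (k - 1)) // T.card = (q - 2) / 2}
      = Nat.choose (k - 1) ((q - 2) / 2) := by
    rw [Nat.card_eq_fintype_card, Fintype.card_finset_len, Fintype.card_fin]
  rw [hsymm]
  exact h1.symm.trans h2
end
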